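/- arXiv:0708.3244 — 6 statements merged into one kernel-verified Lean document; each statement's English description precedes it below -/
import Mathlib

section
/- Under the phone chain of closest, if x(0) is ordered and ε > max_{i∈{1,…,n−1}} Σ_{j=0}^{i−1} μ^j · Δx_{i−j}(0), then for every i ∈ {1,…,n−1} the gap between agents i and i+1 just before they communicate equals Δx_i(i−1) = Σ_{j=0}^{i−1} μ^j · Δx_{i−j}(0); in particular this quantity is smaller than ε, so every interaction in the first round of the phone chain succeeds. -/
open Filter

/-- One step of the Weisbuch–Deffuant update applied by agents `i` and `j`. -/
noncomputable def wdStep {n : ℕ} (ε μ : ℝ) (i j : Fin n) (x : Fin n → ℝ) : Fin n → ℝ :=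
  if |x i - x j| < ε then
    Function.update (Function.update x i ((1 - μ) * x i + μ * x j)) j
      (μ * x i + (1 - μ) * x j)
  else x

/-- Trajectory of the WD model under a communication regime. -/
noncomputable def wdTraj {n : ℕ} (ε μ : ℝ) (regime : ℕ → Fin n × Fin n)
    (x0 : Fin n → ℝ) : ℕ → Fin n → ℝ
  | 0 => x0
  | t + 1 => wdStep ε μ (regime t).1 (regime t).2 (wdTraj ε μ regime x0 t)

/-- Gap between the opinions of agents `i+1` and `i` (0-based). -/
def gap {n : ℕ} (x : Fin n → ℝ) (i : Fin (n - 1)) : ℝ :=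
  x ⟨(i : ℕ) + 1, by have := i.isLt; omega⟩ - x ⟨(i : ℕ), by have := i.isLt; omega⟩

/-- Maximal gap of a profile. -/
noncomputable def maxGap {n : ℕ} (x : Fin n → ℝ) : ℝ := ⨆ i : Fin (n - 1), gap x i

/-- The phone chain of closest: at step `t` the pair (0-based) is
`(t mod (n-1), t mod (n-1) + 1)`. -/
def phoneChain (n : ℕ) (hn : 2 ≤ n) (t : ℕ) : Fin n × Fin n :=
  (⟨t % (n - 1), by have := Nat.mod_lt t (show 0 < n - 1 by omega); omega⟩,
   ⟨t % (n - 1) + 1, by have := Nat.mod_lt t (show 0 < n - 1 by omega); omega⟩)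

/-- `chainBound μ x0 i` is `Σ_{j=0}^{i} μ^j · Δx_{i-j}` (0-based), the paper's
`Σ_{j=0}^{i-1} μ^j Δx_{i-j}(0)` for the 1-based index `i+1`. -/
noncomputable def chainBound {n : ℕ} (μ : ℝ) (x0 : Fin n → ℝ) (i : Fin (n - 1)) : ℝ :=
  ∑ j ∈ Finset.range ((i : ℕ) + 1), μ ^ j * gap x0 ⟨(i : ℕ) - j, by
    have := i.isLt; omega⟩

lemma gap_nonneg {n : ℕ} {x0 : Fin n → ℝ} (hord : Monotone x0) (i : Fin (n-1)) :
    0 ≤ gap x0 i := by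
  have := hord (show (⟨(i:ℕ), by have := i.isLt; omega⟩ : Fin n) ≤ ⟨(i:ℕ)+1, by have := i.isLt; omega⟩ from by
    simp [Fin.le_def])
  simpa [gap] using this

lemma chainBound_nonneg {n : ℕ} {μ : ℝ} (hμ : 0 ≤ μ) {x0 : Fin n → ℝ}
    (hord : Monotone x0) (i : Fin (n-1)) : 0 ≤ chainBound μ x0 i := by
  apply Finset.sum_nonneg
  intro j hj
  exact mul_nonneg (pow_nonneg hμ j) (gap_nonneg hord _)

lemma chainBound_succ {n : ℕ} (μ : ℝ) (x0 : Fin n → ℝ) (t : ℕ) (ht : t + 1 < n - 1) :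
    chainBound μ x0 ⟨t+1, ht⟩ = gap x0 ⟨t+1, ht⟩ + μ * chainBound μ x0 ⟨t, by omega⟩ := by
  unfold chainBound
  rw [Finset.sum_range_succ']
  simp only [pow_zero, one_mul, Nat.sub_zero, Finset.mul_sum]
  rw [add_comm]
  congr 1
  apply Finset.sum_congr rfl
  intro j hj
  have hidx : (⟨t+1-(j+1), by omega⟩ : Fin (n-1)) = ⟨t-j, by omega⟩ :=
    Fin.mk_eq_mk.2 (by omega)
  rw [hidx, pow_succ]
  ring

lemma wd_phoneChain_key {n : ℕ} (hn : 2 ≤ n) (ε μ : ℝ) (hμ0 : 0 < μ)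
    (x0 : Fin n → ℝ) (hord : Monotone x0)
    (hbig : ∀ i : Fin (n - 1), chainBound μ x0 i < ε) :
    ∀ t (ht : t < n - 1),
      (∀ k (hk : k < n), t < k → wdTraj ε μ (phoneChain n hn) x0 t ⟨k, hk⟩ = x0 ⟨k, hk⟩) ∧
      gap (wdTraj ε μ (phoneChain n hn) x0 t) ⟨t, ht⟩ = chainBound μ x0 ⟨t, ht⟩ := by
  intro t
  induction t with
  | zero =>
    intro ht
    refine ⟨fun k hk _ => rfl, ?_⟩
    simp [gap, chainBound, wdTraj]
  | succ t ih =>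
    intro ht
    obtain ⟨ha, hb⟩ := ih (by omega)
    set x := wdTraj ε μ (phoneChain n hn) x0 t with hx
    have hgap : x ⟨t+1, by omega⟩ - x ⟨t, by omega⟩ = chainBound μ x0 ⟨t, by omega⟩ := hb
    have hpc : phoneChain n hn t = (⟨t, by omega⟩, ⟨t+1, by omega⟩) := by
      have hm : t % (n-1) = t := Nat.mod_eq_of_lt (by omega)
      simp [phoneChain, Prod.ext_iff, Fin.ext_iff, hm]
    have hcond : |x ⟨t, by omega⟩ - x ⟨t+1, by omega⟩| < ε := by
      rw [abs_sub_comm, hgap, abs_of_nonneg (chainBound_nonneg hμ0.le hord _)]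
      exact hbig _
    have hstep : wdTraj ε μ (phoneChain n hn) x0 (t+1) =
        Function.update (Function.update x ⟨t, by omega⟩
          ((1 - μ) * x ⟨t, by omega⟩ + μ * x ⟨t+1, by omega⟩)) ⟨t+1, by omega⟩
          (μ * x ⟨t, by omega⟩ + (1 - μ) * x ⟨t+1, by omega⟩) := by
      show wdStep ε μ (phoneChain n hn t).1 (phoneChain n hn t).2 x = _
      rw [hpc]
      simp only [wdStep, if_pos hcond]
    constructor
    · intro k hk hk'
      rw [hstep]
      rw [Function.update_apply, Function.update_apply]
      rw [if_neg (by simp [Fin.ext_iff]; omega), if_neg (by simp [Fin.ext_iff]; omega)]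
      exact ha k hk (by omega)
    · have h2 : t + 2 < n := by omega
      have e2 : wdTraj ε μ (phoneChain n hn) x0 (t+1) ⟨t+2, h2⟩ = x0 ⟨t+2, h2⟩ := by
        rw [hstep, Function.update_apply, Function.update_apply,
          if_neg (by simp [Fin.ext_iff]), if_neg (by simp [Fin.ext_iff])]
        exact ha (t+2) h2 (by omega)
      have e1 : wdTraj ε μ (phoneChain n hn) x0 (t+1) ⟨t+1, by omega⟩ =
          μ * x ⟨t, by omega⟩ + (1 - μ) * x ⟨t+1, by omega⟩ := by
        rw [hstep, Function.update_apply, if_pos rfl]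
      have hxt1 : x ⟨t+1, by omega⟩ = x0 ⟨t+1, by omega⟩ := ha (t+1) (by omega) (by omega)
      have hg : gap (wdTraj ε μ (phoneChain n hn) x0 (t+1)) ⟨t+1, ht⟩ =
          wdTraj ε μ (phoneChain n hn) x0 (t+1) ⟨t+2, h2⟩ -
          wdTraj ε μ (phoneChain n hn) x0 (t+1) ⟨t+1, by omega⟩ := rfl
      rw [hg, e1, e2, chainBound_succ μ x0 t ht, ← hgap, hxt1]
      have hg0 : gap x0 ⟨t+1, ht⟩ = x0 ⟨t+2, h2⟩ - x0 ⟨t+1, by omega⟩ := rfl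
      rw [hg0]
      ring

/-- under the phone chain of closest, the gap between agents `i` and
`i+1` just before they communicate equals `Σ_{j=0}^{i-1} μ^j Δx_{i-j}(0)` (here in
0-based form `chainBound μ x0 i`); in particular it is smaller than `ε`, so every
interaction in the first round succeeds. -/
theorem wd_phoneChain_gap_before_communication {n : ℕ} (hn : 2 ≤ n) (ε μ : ℝ)
    (hε : 0 < ε) (hμ0 : 0 < μ) (hμ : μ ≤ 1 / 2)
    (x0 : Fin n → ℝ) (hord : Monotone x0)
    (hbig : ∀ i : Fin (n - 1), chainBound μ x0 i < ε) :
    ∀ i : Fin (n - 1),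
      gap (wdTraj ε μ (phoneChain n hn) x0 (i : ℕ)) i = chainBound μ x0 i ∧
      gap (wdTraj ε μ (phoneChain n hn) x0 (i : ℕ)) i < ε := by
  intro i
  have h := (wd_phoneChain_key hn ε μ hμ0 x0 hord hbig (i : ℕ) i.isLt).2
  have hi : (⟨(i:ℕ), i.isLt⟩ : Fin (n-1)) = i := rfl
  rw [hi] at h
  exact ⟨h, h ▸ hbig i⟩
end

section
/- One-round contraction of the maximal gap: under the phone chain of closest, if x(0) is ordered and ε > max_{i∈{1,…,n−1}} Σ_{j=0}^{i−1} μ^j · Δx_{i−j}(0), then after one complete round of the chain the maximal gap satisfies max Δx(n−1) ≤ (1 − μ^{n−1} + μ^n) · max Δx(0), where 1 − μ^{n−1} + μ^n < 1. -/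
open Filter

noncomputable def wdA (μ : ℝ) (u : ℕ → ℝ) : ℕ → ℝ
  | 0 => u 0
  | t + 1 => μ * wdA μ u t + (1 - μ) * u (t + 1)

noncomputable def wdD (μ : ℝ) (u : ℕ → ℝ) (t : ℕ) : ℝ :=
  ∑ j ∈ Finset.range (t + 1), μ ^ j * (u (t - j + 1) - u (t - j))

lemma wdD_succ (μ : ℝ) (u : ℕ → ℝ) (t : ℕ) :
    wdD μ u (t + 1) = (u (t + 2) - u (t + 1)) + μ * wdD μ u t := by
  unfold wdD
  rw [Finset.sum_range_succ', Finset.mul_sum]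
  conv_lhs => rw [add_comm]
  congr 1
  · norm_num
  · refine Finset.sum_congr rfl fun j _ => ?_
    have h1 : t + 1 - (j + 1) = t - j := by omega
    rw [h1]; ring

lemma wdD_eq (μ : ℝ) (u : ℕ → ℝ) (t : ℕ) : u (t + 1) - wdA μ u t = wdD μ u t := by
  induction t with
  | zero => simp [wdA, wdD]
  | succ t ih => rw [wdD_succ, wdA, ← ih]; ring

lemma traj_formula {n : ℕ} (hn : 2 ≤ n) (ε μ : ℝ) (x0 : Fin n → ℝ) (u : ℕ → ℝ)
    (hu : ∀ k : Fin n, u (k : ℕ) = x0 k)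
    (hD : ∀ t, t < n - 1 → 0 ≤ wdD μ u t ∧ wdD μ u t < ε) :
    ∀ t, t ≤ n - 1 → ∀ k : Fin n,
      wdTraj ε μ (phoneChain n hn) x0 t k =
        if (k : ℕ) < t then (1 - μ) * wdA μ u (k : ℕ) + μ * u ((k : ℕ) + 1)
        else if (k : ℕ) = t then wdA μ u t
        else u (k : ℕ) := by
  intro t
  induction t with
  | zero =>
    intro _ k
    simp only [wdTraj, Nat.not_lt_zero, if_false]
    by_cases hk : (k : ℕ) = 0
    · rw [if_pos hk, show wdA μ u 0 = u 0 from rfl, ← hk, hu]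
    · rw [if_neg hk, hu]
  | succ t ih =>
    intro ht k
    have ht' : t < n - 1 := by omega
    have hi : ((phoneChain n hn t).1 : ℕ) = t := by
      simp [phoneChain, Nat.mod_eq_of_lt ht']
    have hj : ((phoneChain n hn t).2 : ℕ) = t + 1 := by
      simp [phoneChain, Nat.mod_eq_of_lt ht']
    set i := (phoneChain n hn t).1
    set j := (phoneChain n hn t).2
    have hyi : wdTraj ε μ (phoneChain n hn) x0 t i = wdA μ u t := by
      rw [ih (by omega) i, hi, if_neg (by omega), if_pos rfl]
    have hyj : wdTraj ε μ (phoneChain n hn) x0 t j = u (t + 1) := by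
      rw [ih (by omega) j, hj, if_neg (by omega), if_neg (by omega)]
    have hcond : |wdTraj ε μ (phoneChain n hn) x0 t i
        - wdTraj ε μ (phoneChain n hn) x0 t j| < ε := by
      rw [hyi, hyj, abs_sub_comm, abs_of_nonneg (by rw [wdD_eq]; exact (hD t ht').1)]
      rw [wdD_eq]
      exact (hD t ht').2
    show wdStep ε μ i j (wdTraj ε μ (phoneChain n hn) x0 t) k = _
    rw [wdStep, if_pos hcond]
    by_cases hkj : k = j
    · subst hkj
      rw [Function.update_self, hyi, hyj, hj, if_neg (by omega), if_pos rfl,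
        show wdA μ u (t+1) = μ * wdA μ u t + (1 - μ) * u (t + 1) from rfl]
    · rw [Function.update_of_ne hkj]
      by_cases hki : k = i
      · subst hki
        rw [Function.update_self, hyi, hyj, hi, if_pos (by omega)]
      · rw [Function.update_of_ne hki, ih (by omega) k]
        have hvi : (k : ℕ) ≠ t := fun h => hki (Fin.ext (by rw [h, hi]))
        have hvj : (k : ℕ) ≠ t + 1 := fun h => hkj (Fin.ext (by rw [h, hj]))
        by_cases hlt : (k : ℕ) < t
        · rw [if_pos hlt, if_pos (by omega)]
        · rw [if_neg hlt, if_neg hvi, if_neg (by omega), if_neg hvj]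

/-- one-round contraction of the maximal gap under the phone chain of
closest. -/
theorem wd_phoneChain_one_round_contraction {n : ℕ} (hn : 2 ≤ n) (ε μ : ℝ)
    (hε : 0 < ε) (hμ0 : 0 < μ) (hμ : μ ≤ 1 / 2)
    (x0 : Fin n → ℝ) (hord : Monotone x0)
    (hbig : ∀ i : Fin (n - 1), chainBound μ x0 i < ε) :
    maxGap (wdTraj ε μ (phoneChain n hn) x0 (n - 1))
        ≤ (1 - μ ^ (n - 1) + μ ^ n) * maxGap x0 ∧
    1 - μ ^ (n - 1) + μ ^ n < 1 := by
  haveI : Nonempty (Fin (n - 1)) := ⟨⟨0, by omega⟩⟩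
  have hμ1 : μ ≤ 1 := by linarith
  set u : ℕ → ℝ := fun k => if h : k < n then x0 ⟨k, h⟩ else 0 with hu_def
  have hu : ∀ k : Fin n, u (k : ℕ) = x0 k := fun k => by
    simp only [hu_def, k.isLt, dif_pos]
  set M := maxGap x0 with hM
  -- basic gap facts
  have hgap : ∀ k (h : k < n - 1), gap x0 ⟨k, h⟩ = u (k + 1) - u k := by
    intro k h
    simp only [gap, hu_def]
    rw [dif_pos (by omega : k + 1 < n), dif_pos (by omega : k < n)]
  have hbdd : BddAbove (Set.range fun i : Fin (n - 1) => gap x0 i) :=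
    Set.Finite.bddAbove (Set.finite_range _)
  have hgapM : ∀ k, ∀ h : k < n - 1, u (k + 1) - u k ≤ M := by
    intro k h
    rw [← hgap k h]
    exact le_ciSup hbdd ⟨k, h⟩
  have hgap0 : ∀ k, k < n - 1 → 0 ≤ u (k + 1) - u k := by
    intro k h
    rw [← hgap k h, gap]
    have := hord (show (⟨k, by omega⟩ : Fin n) ≤ ⟨k + 1, by omega⟩ from by
      simp [Fin.le_def])
    linarith
  have hM0 : 0 ≤ M := le_trans (hgap0 0 (by omega)) (hgapM 0 (by omega))
  -- D facts
  have hDnn : ∀ t, t < n - 1 → 0 ≤ wdD μ u t := by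
    intro t ht
    apply Finset.sum_nonneg
    intro j hj
    simp only [Finset.mem_range] at hj
    exact mul_nonneg (pow_nonneg hμ0.le j) (hgap0 (t - j) (by omega))
  have hDchain : ∀ t, ∀ h : t < n - 1, wdD μ u t = chainBound μ x0 ⟨t, h⟩ := by
    intro t h
    unfold wdD chainBound
    refine Finset.sum_congr rfl fun j hj => ?_
    simp only [Finset.mem_range] at hj
    rw [hgap (t - j) (by omega)]
  have hD : ∀ t, t < n - 1 → 0 ≤ wdD μ u t ∧ wdD μ u t < ε := fun t h =>
    ⟨hDnn t h, by rw [hDchain t h]; exact hbig _⟩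
  have hform := traj_formula hn ε μ x0 u hu hD (n - 1) le_rfl
  -- bound on D
  have hDb : ∀ t, t < n - 1 → (1 - μ) * wdD μ u t ≤ (1 - μ ^ (t + 1)) * M := by
    intro t
    induction t with
    | zero =>
      intro h
      rw [show wdD μ u 0 = u 1 - u 0 by simp [wdD]]
      have h2 : u 1 - u 0 ≤ M := hgapM 0 h
      have h3 : (0:ℝ) ≤ u 1 - u 0 := hgap0 0 h
      have hp : μ ^ (0 + 1) = μ := by norm_num
      rw [hp]
      nlinarith [mul_le_mul_of_nonneg_left h2 (by linarith : (0:ℝ) ≤ 1 - μ)]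
    | succ t ih =>
      intro h
      rw [wdD_succ]
      have h1 := ih (by omega)
      have h2 := hgapM (t + 1) h
      have h3 := hgap0 (t + 1) h
      have h4 : (0:ℝ) ≤ μ ^ (t + 1) := pow_nonneg hμ0.le _
      have h5 : μ ^ (t + 2) = μ * μ ^ (t + 1) := by ring
      nlinarith
  have hfactor : μ ^ n = μ * μ ^ (n - 1) := by
    conv_lhs => rw [show n = (n - 1) + 1 by omega]
    rw [pow_succ]; ring
  constructor
  · apply ciSup_le
    intro i
    have hilt : (i : ℕ) < n - 1 := i.isLt
    have hz1 : wdTraj ε μ (phoneChain n hn) x0 (n - 1)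
        ⟨(i : ℕ), by omega⟩ = (1 - μ) * wdA μ u (i : ℕ) + μ * u ((i : ℕ) + 1) := by
      rw [hform ⟨(i : ℕ), by omega⟩]
      simp only []
      rw [if_pos hilt]
    rw [gap, hz1]
    have hq0 : (0:ℝ) ≤ μ ^ (n - 1) := pow_nonneg hμ0.le _
    have hDe := wdD_eq μ u (i : ℕ)
    have ha : wdA μ u (i : ℕ) = u ((i : ℕ) + 1) - wdD μ u (i : ℕ) := by linarith
    have h1 := hDb (i : ℕ) hilt
    have h4 := hDnn (i : ℕ) hilt
    by_cases hcase : (i : ℕ) + 1 < n - 1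
    · have hz2 : wdTraj ε μ (phoneChain n hn) x0 (n - 1)
          ⟨(i : ℕ) + 1, by omega⟩
          = (1 - μ) * wdA μ u ((i : ℕ) + 1) + μ * u ((i : ℕ) + 2) := by
        rw [hform ⟨(i : ℕ) + 1, by omega⟩]
        simp only []
        rw [if_pos hcase]
      rw [hz2, show wdA μ u ((i:ℕ) + 1) = μ * wdA μ u (i:ℕ) + (1 - μ) * u ((i:ℕ) + 1)
        from rfl, ha, hfactor]
      have h2 : u ((i:ℕ) + 2) - u ((i:ℕ) + 1) ≤ M := hgapM ((i:ℕ) + 1) hcase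
      have h3 : (0:ℝ) ≤ u ((i:ℕ) + 2) - u ((i:ℕ) + 1) := hgap0 ((i:ℕ) + 1) hcase
      have hp0 : (0:ℝ) ≤ μ ^ ((i:ℕ) + 1) := pow_nonneg hμ0.le _
      have hpq : μ ^ (n - 1) ≤ μ ^ ((i:ℕ) + 1) :=
        pow_le_pow_of_le_one hμ0.le hμ1 (by omega)
      nlinarith [mul_le_mul_of_nonneg_left h1 (by linarith : (0:ℝ) ≤ 1 - μ),
        mul_le_mul_of_nonneg_left h2 hμ0.le,
        mul_nonneg (mul_nonneg hM0 (by linarith : (0:ℝ) ≤ μ ^ ((i:ℕ)+1) - μ ^ (n-1)))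
          (by linarith : (0:ℝ) ≤ 1 - μ)]
    · have hie : (i : ℕ) + 1 = n - 1 := by omega
      have hz2 : wdTraj ε μ (phoneChain n hn) x0 (n - 1)
          ⟨(i : ℕ) + 1, by omega⟩ = wdA μ u (n - 1) := by
        rw [hform ⟨(i : ℕ) + 1, by omega⟩]
        simp only []
        rw [if_neg (by omega), if_pos hie]
      have hA : wdA μ u (n - 1) = μ * wdA μ u (i:ℕ) + (1 - μ) * u ((i:ℕ) + 1) := by
        conv_lhs => rw [← hie]
        rfl
      rw [hz2, hA, ha, hfactor]
      have hpq : μ ^ ((i:ℕ) + 1) = μ ^ (n - 1) := by rw [hie]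
      rw [hpq] at h1
      nlinarith [mul_nonneg (mul_nonneg hμ0.le hq0) hM0,
        mul_nonneg hμ0.le h4]
  · have := pow_pos hμ0 (n - 1)
    rw [hfactor]
    nlinarith
end

section
/- Geometric decay of the maximal gap over phone-chain rounds: under the phone chain of closest, if x(0) is ordered and ε > max_{i∈{1,…,n−1}} Σ_{j=0}^{i−1} μ^j · Δx_{i−j}(0), then with q := 1 − μ^{n−1} + μ^n ∈ (0,1) one has max Δx(r·(n−1)) ≤ q^r · max Δx(0) for every round r ∈ ℕ; consequently max Δx(t) → 0 as t → ∞. -/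
open Filter

namespace WDaux

noncomputable def aSeq (μ : ℝ) (y : ℕ → ℝ) : ℕ → ℝ
  | 0 => y 0
  | k + 1 => μ * aSeq μ y k + (1 - μ) * y (k + 1)

noncomputable def gSeq (μ : ℝ) (y : ℕ → ℝ) (k : ℕ) : ℝ := y (k + 1) - aSeq μ y k

lemma gSeq_zero (μ : ℝ) (y : ℕ → ℝ) : gSeq μ y 0 = y 1 - y 0 := rfl

lemma gSeq_succ (μ : ℝ) (y : ℕ → ℝ) (k : ℕ) :
    gSeq μ y (k + 1) = (y (k + 2) - y (k + 1)) + μ * gSeq μ y k := by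
  simp only [gSeq, aSeq]; ring

lemma gSeq_nonneg (μ : ℝ) (y : ℕ → ℝ) (hμ : 0 ≤ μ) :
    ∀ k, (∀ i ≤ k, 0 ≤ y (i + 1) - y i) → 0 ≤ gSeq μ y k := by
  intro k
  induction k with
  | zero => intro h; simpa [gSeq_zero] using h 0 le_rfl
  | succ k ih =>
    intro h
    rw [gSeq_succ]
    have h1 := h (k + 1) le_rfl
    have h2 := ih (fun i hi => h i (by omega))
    positivity

lemma gSeq_le (μ C : ℝ) (y : ℕ → ℝ) (hμ : 0 ≤ μ) (hμ1 : μ ≤ 1) (hC : 0 ≤ C) :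
    ∀ k, (∀ i ≤ k, y (i + 1) - y i ≤ (1 - μ) * C) → gSeq μ y k ≤ C := by
  intro k
  induction k with
  | zero =>
    intro h
    have := h 0 le_rfl
    rw [gSeq_zero]; nlinarith
  | succ k ih =>
    intro h
    rw [gSeq_succ]
    have h1 := h (k + 1) le_rfl
    have h2 := ih (fun i hi => h i (by omega))
    nlinarith

lemma gSeq_le' (μ M : ℝ) (y : ℕ → ℝ) (hμ : 0 ≤ μ) (hμ1 : μ ≤ 1) (hM : 0 ≤ M) :
    ∀ k, (∀ i ≤ k, y (i + 1) - y i ≤ M) → (1 - μ) * gSeq μ y k ≤ (1 - μ ^ (k + 1)) * M := by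
  intro k
  induction k with
  | zero =>
    intro h
    have := h 0 le_rfl
    rw [gSeq_zero]
    have hp : μ ^ (0 + 1) = μ := by ring
    rw [hp]; nlinarith
  | succ k ih =>
    intro h
    rw [gSeq_succ]
    have h1 := h (k + 1) le_rfl
    have h2 := ih (fun i hi => h i (by omega))
    have hp : μ ^ (k + 1 + 1) = μ * μ ^ (k + 1) := by ring
    rw [hp]
    nlinarith

lemma gSeq_sum (μ : ℝ) (y : ℕ → ℝ) :
    ∀ k, gSeq μ y k = ∑ j ∈ Finset.range (k + 1), μ ^ j * (y (k - j + 1) - y (k - j)) := by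
  intro k
  induction k with
  | zero => simp [gSeq_zero]
  | succ k ih =>
    rw [gSeq_succ, ih, Finset.sum_range_succ' (fun j => μ ^ j * (y (k + 1 - j + 1) - y (k + 1 - j))) (k + 1)]
    simp only [pow_zero, one_mul, Nat.sub_zero]
    rw [Finset.mul_sum]
    have : ∀ j ∈ Finset.range (k + 1), μ ^ (j + 1) * (y (k + 1 - (j + 1) + 1) - y (k + 1 - (j + 1)))
        = μ * (μ ^ j * (y (k - j + 1) - y (k - j))) := by
      intro j hj
      have : k + 1 - (j + 1) = k - j := by omega
      rw [this]; ring
    rw [Finset.sum_congr rfl this]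
    ring

end WDaux

namespace WDaux

noncomputable def pad {n : ℕ} (hn : 2 ≤ n) (y : Fin n → ℝ) : ℕ → ℝ :=
  fun i => y ⟨min i (n - 1), by omega⟩

lemma pad_eq {n : ℕ} (hn : 2 ≤ n) (y : Fin n → ℝ) (i : ℕ) (h : i < n) :
    pad hn y i = y ⟨i, h⟩ := by
  simp only [pad]
  congr 1
  exact Fin.ext (by simp; omega)

noncomputable def midP {n : ℕ} (hn : 2 ≤ n) (μ : ℝ) (y : Fin n → ℝ) (s : ℕ) : Fin n → ℝ :=
  fun i => if (i : ℕ) < s then (1 - μ) * aSeq μ (pad hn y) i + μ * pad hn y ((i : ℕ) + 1)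
    else if (i : ℕ) = s then aSeq μ (pad hn y) i
    else y i

lemma midP_zero {n : ℕ} (hn : 2 ≤ n) (μ : ℝ) (y : Fin n → ℝ) : midP hn μ y 0 = y := by
  funext i
  simp only [midP]
  rcases Nat.eq_zero_or_pos (i : ℕ) with h | h
  · rw [if_neg (by omega), if_pos h, h]
    rw [show aSeq μ (pad hn y) 0 = pad hn y 0 from rfl, pad_eq hn y 0 (by omega)]
    congr 1
    exact Fin.ext (by simp; omega)
  · rw [if_neg (by omega), if_neg (by omega)]

lemma wdStep_eval {n : ℕ} (ε μ : ℝ) (x : Fin n → ℝ) (i j : Fin n) (hij : i ≠ j)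
    (h : |x i - x j| < ε) (l : Fin n) :
    wdStep ε μ i j x l = if l = j then μ * x i + (1 - μ) * x j
      else if l = i then (1 - μ) * x i + μ * x j else x l := by
  simp only [wdStep, if_pos h, Function.update_apply]

end WDaux

namespace WDaux

lemma traj_round {n : ℕ} (hn : 2 ≤ n) (ε μ : ℝ) (x0 : Fin n → ℝ) (r : ℕ)
    (hfire : ∀ k, k + 1 ≤ n - 1 →
      |aSeq μ (pad hn (wdTraj ε μ (phoneChain n hn) x0 (r * (n - 1)))) k
        - pad hn (wdTraj ε μ (phoneChain n hn) x0 (r * (n - 1))) (k + 1)| < ε) :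
    ∀ s, s ≤ n - 1 → wdTraj ε μ (phoneChain n hn) x0 (r * (n - 1) + s)
      = midP hn μ (wdTraj ε μ (phoneChain n hn) x0 (r * (n - 1))) s := by
  set y := wdTraj ε μ (phoneChain n hn) x0 (r * (n - 1)) with hy
  set Y := pad hn y with hY
  intro s
  induction s with
  | zero => intro _; rw [Nat.add_zero, midP_zero]
  | succ s ih =>
    intro hs
    have hsm : s < n - 1 := by omega
    have IH := ih (by omega)
    have hmod : (r * (n - 1) + s) % (n - 1) = s := by
      rw [Nat.mul_comm, Nat.mul_add_mod, Nat.mod_eq_of_lt hsm]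
    have hpc : phoneChain n hn (r * (n - 1) + s)
        = (⟨s, by omega⟩, ⟨s + 1, by omega⟩) := by
      simp only [phoneChain, hmod]
    have hstep : wdTraj ε μ (phoneChain n hn) x0 (r * (n - 1) + s + 1)
        = wdStep ε μ ⟨s, by omega⟩ ⟨s + 1, by omega⟩
            (wdTraj ε μ (phoneChain n hn) x0 (r * (n - 1) + s)) := by
      rw [show wdTraj ε μ (phoneChain n hn) x0 (r * (n - 1) + s + 1)
          = wdStep ε μ (phoneChain n hn (r * (n - 1) + s)).1
              (phoneChain n hn (r * (n - 1) + s)).2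
              (wdTraj ε μ (phoneChain n hn) x0 (r * (n - 1) + s)) from rfl, hpc]
    rw [show r * (n - 1) + (s + 1) = r * (n - 1) + s + 1 from rfl, hstep, IH]
    have hXi : midP hn μ y s ⟨s, by omega⟩ = aSeq μ Y s := by
      show (if s < s then _ else if s = s then aSeq μ Y s else _) = aSeq μ Y s
      rw [if_neg (by omega), if_pos rfl]
    have hXj : midP hn μ y s ⟨s + 1, by omega⟩ = Y (s + 1) := by
      show (if s + 1 < s then _ else if s + 1 = s then _ else y ⟨s + 1, _⟩) = Y (s + 1)
      rw [if_neg (by omega), if_neg (by omega), hY, pad_eq hn y (s + 1) (by omega)]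
    have hcond : |midP hn μ y s ⟨s, by omega⟩ - midP hn μ y s ⟨s + 1, by omega⟩| < ε := by
      rw [hXi, hXj]; exact hfire s (by omega)
    funext l
    rw [wdStep_eval ε μ _ _ _ (by simp [Fin.ext_iff]) hcond l, hXi, hXj]
    have hl : midP hn μ y (s + 1) l = if (l : ℕ) < s + 1 then
          (1 - μ) * aSeq μ Y (l : ℕ) + μ * Y ((l : ℕ) + 1)
        else if (l : ℕ) = s + 1 then aSeq μ Y (l : ℕ) else y l := rfl
    have hl' : midP hn μ y s l = if (l : ℕ) < s then
          (1 - μ) * aSeq μ Y (l : ℕ) + μ * Y ((l : ℕ) + 1)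
        else if (l : ℕ) = s then aSeq μ Y (l : ℕ) else y l := rfl
    rw [hl]
    by_cases hl1 : (l : ℕ) = s + 1
    · rw [if_pos (Fin.ext hl1), if_neg (by omega), if_pos hl1, hl1]
      show μ * aSeq μ Y s + (1 - μ) * Y (s + 1) = aSeq μ Y (s + 1)
      rw [show aSeq μ Y (s + 1) = μ * aSeq μ Y s + (1 - μ) * Y (s + 1) from rfl]
    · rw [if_neg (fun h => hl1 (congrArg Fin.val h))]
      by_cases hl0 : (l : ℕ) = s
      · rw [if_pos (Fin.ext hl0), if_pos (by omega), hl0]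
      · rw [if_neg (fun h => hl0 (congrArg Fin.val h)), hl']
        by_cases h2 : (l : ℕ) < s
        · rw [if_pos h2, if_pos (by omega)]
        · rw [if_neg h2, if_neg hl0, if_neg (by omega), if_neg hl1]

end WDaux

namespace WDaux

lemma gap_midP {n : ℕ} (hn : 2 ≤ n) (μ : ℝ) (y : Fin n → ℝ) (s : ℕ) (i : ℕ) (hi : i < n - 1) :
    gap (midP hn μ y s) ⟨i, hi⟩ =
      if i + 1 < s then
        (1 - 2 * μ) * gSeq μ (pad hn y) i + μ * gSeq μ (pad hn y) (i + 1)
      else if i + 1 = s then (1 - 2 * μ) * gSeq μ (pad hn y) i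
      else if i = s then gSeq μ (pad hn y) i
      else pad hn y (i + 1) - pad hn y i := by
  set Y := pad hn y with hY
  have h1 : midP hn μ y s ⟨i + 1, by omega⟩ = if i + 1 < s then
        (1 - μ) * aSeq μ Y (i + 1) + μ * Y (i + 2)
      else if i + 1 = s then aSeq μ Y (i + 1) else y ⟨i + 1, by omega⟩ := rfl
  have h0 : midP hn μ y s ⟨i, by omega⟩ = if i < s then
        (1 - μ) * aSeq μ Y i + μ * Y (i + 1)
      else if i = s then aSeq μ Y i else y ⟨i, by omega⟩ := rfl
  have hgap : gap (midP hn μ y s) ⟨i, hi⟩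
      = midP hn μ y s ⟨i + 1, by omega⟩ - midP hn μ y s ⟨i, by omega⟩ := rfl
  have hyi : y ⟨i, show i < n by omega⟩ = Y i := (pad_eq hn y i (by omega)).symm
  have hyi1 : y ⟨i + 1, show i + 1 < n by omega⟩ = Y (i + 1) := (pad_eq hn y (i + 1) (by omega)).symm
  have haS : aSeq μ Y (i + 1) = μ * aSeq μ Y i + (1 - μ) * Y (i + 1) := rfl
  have hg : gSeq μ Y i = Y (i + 1) - aSeq μ Y i := rfl
  have hg1 : gSeq μ Y (i + 1) = Y (i + 2) - aSeq μ Y (i + 1) := rfl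
  rw [hgap, h1, h0]
  by_cases c1 : i + 1 < s
  · rw [if_pos c1, if_pos (by omega), if_pos c1]
    rw [haS, hg, hg1, haS]; ring
  · rw [if_neg c1]
    by_cases c2 : i + 1 = s
    · rw [if_pos c2, if_pos (by omega), if_neg c1, if_pos c2]
      rw [haS, hg]; ring
    · rw [if_neg c2]
      by_cases c3 : i = s
      · rw [if_neg (by omega), if_pos c3, if_neg c1, if_neg c2, if_pos c3, hyi1, hg]
      · rw [if_neg (by omega), if_neg c3, if_neg c1, if_neg c2, if_neg c3, hyi1, hyi]

lemma gSeq_eq_chainBound {n : ℕ} (hn : 2 ≤ n) (μ : ℝ) (x0 : Fin n → ℝ)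
    (k : ℕ) (hk : k < n - 1) :
    gSeq μ (pad hn x0) k = chainBound μ x0 ⟨k, hk⟩ := by
  rw [gSeq_sum]
  unfold chainBound
  apply Finset.sum_congr rfl
  intro j hj
  have hjk : j ≤ k := by simpa [Nat.lt_succ_iff] using hj
  congr 1
  simp only [gap]
  rw [pad_eq hn x0 (k - j + 1) (by omega), pad_eq hn x0 (k - j) (by omega)]

end WDaux

set_option maxHeartbeats 1000000 in
open WDaux in
/-- geometric decay of the maximal gap over phone-chain rounds, and
convergence of the maximal gap to zero. -/
theorem wd_phoneChain_maxGap_geometric_decay {n : ℕ} (hn : 2 ≤ n) (ε μ : ℝ)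
    (hε : 0 < ε) (hμ0 : 0 < μ) (hμ : μ ≤ 1 / 2)
    (x0 : Fin n → ℝ) (hord : Monotone x0)
    (hbig : ∀ i : Fin (n - 1), chainBound μ x0 i < ε) :
    0 < 1 - μ ^ (n - 1) + μ ^ n ∧
    1 - μ ^ (n - 1) + μ ^ n < 1 ∧
    (∀ r : ℕ, maxGap (wdTraj ε μ (phoneChain n hn) x0 (r * (n - 1)))
        ≤ (1 - μ ^ (n - 1) + μ ^ n) ^ r * maxGap x0) ∧
    Tendsto (fun t => maxGap (wdTraj ε μ (phoneChain n hn) x0 t)) atTop (nhds 0) := by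
  have hμ1 : μ ≤ 1 := by linarith
  have hμnn : (0:ℝ) ≤ μ := le_of_lt hμ0
  set q : ℝ := 1 - μ ^ (n - 1) + μ ^ n with hq
  set traj := wdTraj ε μ (phoneChain n hn) x0 with htraj
  have hpc : μ ^ n = μ ^ (n - 1) * μ := by
    rw [← pow_succ]; congr 1; omega
  have hμm_le : μ ^ (n - 1) ≤ μ := pow_le_of_le_one hμnn hμ1 (by omega)
  have hμm_nn : (0:ℝ) ≤ μ ^ (n - 1) := pow_nonneg hμnn _
  have hμm_le1 : μ ^ (n - 1) ≤ 1 := pow_le_one₀ hμnn hμ1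
  have hμm_pos : 0 < μ ^ (n - 1) := pow_pos hμ0 _
  have hq_pos : 0 < q := by rw [hq, hpc]; nlinarith
  have hq_lt : q < 1 := by
    rw [hq, hpc]
    nlinarith [mul_pos hμm_pos (show (0:ℝ) < 1 - μ by linarith)]
  have hq_nn : (0:ℝ) ≤ q := le_of_lt hq_pos
  haveI hne : Nonempty (Fin (n - 1)) := ⟨⟨0, by omega⟩⟩
  have bdd : ∀ z : Fin n → ℝ, BddAbove (Set.range (gap z)) :=
    fun z => (Set.finite_range _).bddAbove
  have gap_le_max : ∀ (z : Fin n → ℝ) (i : Fin (n - 1)), gap z i ≤ maxGap z :=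
    fun z i => le_ciSup (bdd z) i
  have max_le : ∀ (z : Fin n → ℝ) (c : ℝ), (∀ i : Fin (n - 1), gap z i ≤ c) → maxGap z ≤ c :=
    fun z c h => ciSup_le h
  have gap_pad : ∀ (z : Fin n → ℝ) (i : ℕ) (hi : i < n - 1),
      gap z ⟨i, hi⟩ = pad hn z (i + 1) - pad hn z i := by
    intro z i hi
    simp only [gap]
    rw [pad_eq hn z (i + 1) (by omega), pad_eq hn z i (by omega)]
  -- the constant C0, strict bound for the g-values
  have hrne : (Finset.range (n - 1)).Nonempty := Finset.nonempty_range_iff.2 (by omega)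
  set C0 : ℝ := Finset.sup' (Finset.range (n - 1)) hrne (fun k => gSeq μ (pad hn x0) k) with hC0
  have hC0lt : C0 < ε := by
    rw [hC0, Finset.sup'_lt_iff]
    intro k hk
    rw [gSeq_eq_chainBound hn μ x0 k (Finset.mem_range.1 hk)]
    exact hbig _
  have hg0_le_C0 : ∀ k, k < n - 1 → gSeq μ (pad hn x0) k ≤ C0 :=
    fun k hk => Finset.le_sup' _ (Finset.mem_range.2 hk)
  have hord' : ∀ i, i < n - 1 → 0 ≤ pad hn x0 (i + 1) - pad hn x0 i := by
    intro i hi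
    rw [pad_eq hn x0 (i + 1) (by omega), pad_eq hn x0 i (by omega)]
    have := hord (show (⟨i, by omega⟩ : Fin n) ≤ ⟨i + 1, by omega⟩ from by
      simp [Fin.le_def])
    linarith
  have hC0nn : (0:ℝ) ≤ C0 := by
    refine le_trans ?_ (hg0_le_C0 0 (by omega))
    rw [show gSeq μ (pad hn x0) 0 = pad hn x0 1 - pad hn x0 0 from rfl]
    exact hord' 0 (by omega)
  have htraj0 : traj 0 = x0 := rfl
  -- fire condition from the invariant data
  have mkfire : ∀ r : ℕ,
      (∀ i, i < n - 1 → 0 ≤ pad hn (traj (r * (n - 1))) (i + 1) - pad hn (traj (r * (n - 1))) i) →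
      (∀ k, k < n - 1 → gSeq μ (pad hn (traj (r * (n - 1)))) k ≤ C0) →
      (∀ k, k + 1 ≤ n - 1 →
        |aSeq μ (pad hn (traj (r * (n - 1)))) k - pad hn (traj (r * (n - 1))) (k + 1)| < ε) := by
    intro r hpos hgC k hk
    set Y := pad hn (traj (r * (n - 1)))
    have hgnn : 0 ≤ gSeq μ Y k := gSeq_nonneg μ Y hμnn k (fun i hi => hpos i (by omega))
    have h1 : aSeq μ Y k - Y (k + 1) = -(gSeq μ Y k) := by
      rw [show gSeq μ Y k = Y (k + 1) - aSeq μ Y k from rfl]; ring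
    rw [h1, abs_neg, abs_of_nonneg hgnn]
    exact lt_of_le_of_lt (hgC k (by omega)) hC0lt
  -- main invariant
  have key : ∀ r : ℕ,
      (∀ i, i < n - 1 → 0 ≤ pad hn (traj (r * (n - 1))) (i + 1) - pad hn (traj (r * (n - 1))) i) ∧
      (∀ k, k < n - 1 → gSeq μ (pad hn (traj (r * (n - 1)))) k ≤ C0) ∧
      maxGap (traj (r * (n - 1))) ≤ q ^ r * maxGap x0 := by
    intro r
    induction r with
    | zero =>
      rw [Nat.zero_mul, htraj0]
      exact ⟨hord', hg0_le_C0, by rw [pow_zero, one_mul]⟩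
    | succ r ih =>
      obtain ⟨hδpos, hgC, hM⟩ := ih
      set Y := pad hn (traj (r * (n - 1))) with hYdef
      set M := maxGap (traj (r * (n - 1))) with hMdef
      have hgnn : ∀ k, k < n - 1 → 0 ≤ gSeq μ Y k :=
        fun k hk => gSeq_nonneg μ Y hμnn k (fun i hi => hδpos i (by omega))
      have hfire := mkfire r hδpos hgC
      have hround := traj_round hn ε μ x0 r hfire (n - 1) le_rfl
      have hidx : (r + 1) * (n - 1) = r * (n - 1) + (n - 1) := by ring
      have hnewgap : ∀ (i : ℕ) (hi : i < n - 1),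
          gap (traj ((r + 1) * (n - 1))) ⟨i, hi⟩ =
            if i + 1 < n - 1 then (1 - 2 * μ) * gSeq μ Y i + μ * gSeq μ Y (i + 1)
            else (1 - 2 * μ) * gSeq μ Y i := by
        intro i hi
        rw [hidx, htraj, hround, ← htraj, gap_midP hn μ _ (n - 1) i hi, ← hYdef]
        by_cases c : i + 1 < n - 1
        · rw [if_pos c, if_pos c]
        · rw [if_neg c, if_pos (by omega), if_neg c]
      have hMnn : (0:ℝ) ≤ M := by
        refine le_trans ?_ (gap_le_max _ ⟨0, by omega⟩)
        rw [gap_pad _ 0 (by omega)]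
        exact hδpos 0 (by omega)
      have hδleM : ∀ i, i < n - 1 → Y (i + 1) - Y i ≤ M := by
        intro i hi
        rw [← gap_pad _ i hi]
        exact gap_le_max _ ⟨i, hi⟩
      have hgM : ∀ k, k < n - 1 → (1 - μ) * gSeq μ Y k ≤ (1 - μ ^ (k + 1)) * M :=
        fun k hk => gSeq_le' μ M Y hμnn hμ1 hMnn k (fun i hi => hδleM i (by omega))
      -- bound on new gaps by q * M
      have hnew_le : ∀ (i : ℕ) (hi : i < n - 1),
          gap (traj ((r + 1) * (n - 1))) ⟨i, hi⟩ ≤ q * M := by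
        intro i hi
        rw [hnewgap i hi]
        have hpi : μ ^ (n - 1) ≤ μ ^ (i + 1) := pow_le_pow_of_le_one hμnn hμ1 (by omega)
        have hpi_nn : (0:ℝ) ≤ μ ^ (i + 1) := pow_nonneg hμnn _
        have hpi_le1 : μ ^ (i + 1) ≤ 1 := pow_le_one₀ hμnn hμ1
        have hgiM := hgM i hi
        have hgi_nn := hgnn i hi
        by_cases c : i + 1 < n - 1
        · rw [if_pos c]
          have hgi1M := hgM (i + 1) c
          have hgi1_nn := hgnn (i + 1) c
          have hp2 : μ ^ (i + 1 + 1) = μ * μ ^ (i + 1) := by ring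
          rw [hp2] at hgi1M
          have hmul : (1 - μ) * ((1 - 2 * μ) * gSeq μ Y i + μ * gSeq μ Y (i + 1))
              ≤ (1 - μ) * (q * M) := by
            have e2 : (1 - 2 * μ) * ((1 - μ) * gSeq μ Y i)
                ≤ (1 - 2 * μ) * ((1 - μ ^ (i + 1)) * M) :=
              mul_le_mul_of_nonneg_left hgiM (by linarith)
            have e3 : μ * ((1 - μ) * gSeq μ Y (i + 1))
                ≤ μ * ((1 - μ * μ ^ (i + 1)) * M) :=
              mul_le_mul_of_nonneg_left hgi1M hμnn
            have e4 : (1 - 2 * μ) * ((1 - μ ^ (i + 1)) * M) + μ * ((1 - μ * μ ^ (i + 1)) * M)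
                ≤ (1 - μ) * (q * M) := by
              rw [hq, hpc]
              nlinarith [mul_nonneg (mul_nonneg (sub_nonneg.2 hμ1) (sub_nonneg.2 hμ1))
                (mul_nonneg (sub_nonneg.2 hpi) hMnn)]
            nlinarith
          have h1μ : (0:ℝ) < 1 - μ := by linarith
          exact le_of_mul_le_mul_left hmul h1μ
        · rw [if_neg c]
          have hii : μ ^ (i + 1) = μ ^ (n - 1) := by
            congr 1; omega
          rw [hii] at hgiM
          have hmul : (1 - μ) * ((1 - 2 * μ) * gSeq μ Y i) ≤ (1 - μ) * (q * M) := by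
            have e2 : (1 - 2 * μ) * ((1 - μ) * gSeq μ Y i)
                ≤ (1 - 2 * μ) * ((1 - μ ^ (n - 1)) * M) :=
              mul_le_mul_of_nonneg_left hgiM (by linarith)
            have e4 : (1 - 2 * μ) * ((1 - μ ^ (n - 1)) * M) ≤ (1 - μ) * (q * M) := by
              rw [hq, hpc]
              have hμc : μ * μ ^ (n - 1) ≤ 1 := by nlinarith
              have hkey : (μ * μ ^ (n - 1)) * (μ * M) ≤ μ * M :=
                mul_le_of_le_one_left (mul_nonneg hμnn hMnn) hμc
              nlinarith [mul_nonneg hμnn hMnn]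
            nlinarith
          have h1μ : (0:ℝ) < 1 - μ := by linarith
          exact le_of_mul_le_mul_left hmul h1μ
      -- nonnegativity of new gaps
      have hnew_nn : ∀ (i : ℕ) (hi : i < n - 1),
          0 ≤ gap (traj ((r + 1) * (n - 1))) ⟨i, hi⟩ := by
        intro i hi
        rw [hnewgap i hi]
        by_cases c : i + 1 < n - 1
        · rw [if_pos c]
          have := hgnn i hi; have := hgnn (i + 1) c
          nlinarith
        · rw [if_neg c]
          have := hgnn i hi
          nlinarith
      -- bound on new gaps by (1-μ)*C0
      have hnew_leC : ∀ (i : ℕ) (hi : i < n - 1),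
          gap (traj ((r + 1) * (n - 1))) ⟨i, hi⟩ ≤ (1 - μ) * C0 := by
        intro i hi
        rw [hnewgap i hi]
        have h1 := hgC i hi
        have h1' := hgnn i hi
        by_cases c : i + 1 < n - 1
        · rw [if_pos c]
          have h2 := hgC (i + 1) c
          have h2' := hgnn (i + 1) c
          nlinarith
        · rw [if_neg c]
          nlinarith
      refine ⟨?_, ?_, ?_⟩
      · intro i hi
        rw [← gap_pad _ i hi]
        exact hnew_nn i hi
      · intro k hk
        refine gSeq_le μ C0 (pad hn (traj ((r + 1) * (n - 1)))) hμnn hμ1 hC0nn k ?_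
        intro i hi
        rw [← gap_pad _ i (by omega)]
        exact hnew_leC i (by omega)
      · have hstep : maxGap (traj ((r + 1) * (n - 1))) ≤ q * M := by
          refine max_le _ _ ?_
          intro i
          have := hnew_le (i : ℕ) i.isLt
          simpa using this
        calc maxGap (traj ((r + 1) * (n - 1))) ≤ q * M := hstep
          _ ≤ q * (q ^ r * maxGap x0) := mul_le_mul_of_nonneg_left hM hq_nn
          _ = q ^ (r + 1) * maxGap x0 := by ring
  refine ⟨hq_pos, hq_lt, fun r => (key r).2.2, ?_⟩
  -- convergence
  have hbound : ∀ t : ℕ, 0 ≤ maxGap (traj t) ∧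
      maxGap (traj t) ≤ 2 * (q ^ (t / (n - 1)) * maxGap x0) := by
    intro t
    obtain ⟨hδpos, hgC, hM⟩ := key (t / (n - 1))
    set r := t / (n - 1) with hr
    set s := t % (n - 1) with hs
    set Y := pad hn (traj (r * (n - 1))) with hYdef
    set M := maxGap (traj (r * (n - 1))) with hMdef
    have hts : r * (n - 1) + s = t := by
      rw [hr, hs, Nat.mul_comm]; exact Nat.div_add_mod t (n - 1)
    have hslt : s < n - 1 := Nat.mod_lt _ (by omega)
    have hfire := mkfire r hδpos hgC
    have hmid := traj_round hn ε μ x0 r hfire s (le_of_lt hslt)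
    have htmid : traj t = midP hn μ (traj (r * (n - 1))) s := by
      rw [← hts]; exact hmid
    have hgnn : ∀ k, k < n - 1 → 0 ≤ gSeq μ Y k :=
      fun k hk => gSeq_nonneg μ Y hμnn k (fun i hi => hδpos i (by omega))
    have hMnn : (0:ℝ) ≤ M := by
      refine le_trans ?_ (gap_le_max _ ⟨0, by omega⟩)
      rw [gap_pad _ 0 (by omega)]
      exact hδpos 0 (by omega)
    have hδleM : ∀ i, i < n - 1 → Y (i + 1) - Y i ≤ M := by
      intro i hi
      rw [← gap_pad _ i hi]
      exact gap_le_max _ ⟨i, hi⟩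
    have hg2M : ∀ k, k < n - 1 → gSeq μ Y k ≤ 2 * M := by
      intro k hk
      have h1 := gSeq_le' μ M Y hμnn hμ1 hMnn k (fun i hi => hδleM i (by omega))
      have h2 : (1 - μ ^ (k + 1)) * M ≤ M := by
        nlinarith [pow_nonneg hμnn (k + 1), mul_nonneg (pow_nonneg hμnn (k + 1)) hMnn]
      have h3 := hgnn k hk
      nlinarith
    have hcase : ∀ (i : ℕ) (hi : i < n - 1),
        0 ≤ gap (traj t) ⟨i, hi⟩ ∧ gap (traj t) ⟨i, hi⟩ ≤ 2 * M := by
      intro i hi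
      rw [htmid, gap_midP hn μ _ s i hi, ← hYdef]
      by_cases c1 : i + 1 < s
      · rw [if_pos c1]
        have h1 := hgnn i hi; have h1' := hg2M i hi
        have h2 := hgnn (i + 1) (by omega); have h2' := hg2M (i + 1) (by omega)
        constructor <;> nlinarith
      · rw [if_neg c1]
        by_cases c2 : i + 1 = s
        · rw [if_pos c2]
          have h1 := hgnn i hi; have h1' := hg2M i hi
          constructor <;> nlinarith
        · rw [if_neg c2]
          by_cases c3 : i = s
          · rw [if_pos c3]
            have h1 := hgnn i hi; have h1' := hg2M i hi
            constructor <;> nlinarith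
          · rw [if_neg c3]
            have h1 := hδpos i hi; have h1' := hδleM i hi
            constructor <;> nlinarith
    constructor
    · refine le_trans ?_ (gap_le_max _ ⟨0, by omega⟩)
      exact (hcase 0 (by omega)).1
    · have h2M : maxGap (traj t) ≤ 2 * M := by
        refine max_le _ _ ?_
        intro i
        have := (hcase (i : ℕ) i.isLt).2
        simpa using this
      calc maxGap (traj t) ≤ 2 * M := h2M
        _ ≤ 2 * (q ^ r * maxGap x0) := by linarith [hM]
  have hdivtop : Tendsto (fun t : ℕ => t / (n - 1)) atTop atTop := by
    refine tendsto_atTop_atTop.2 (fun b => ⟨b * (n - 1), fun a ha => ?_⟩)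
    exact (Nat.le_div_iff_mul_le (by omega)).2 ha
  have hpow0 : Tendsto (fun r : ℕ => q ^ r) atTop (nhds 0) :=
    tendsto_pow_atTop_nhds_zero_of_lt_one hq_nn hq_lt
  have hlim : Tendsto (fun t : ℕ => 2 * (q ^ (t / (n - 1)) * maxGap x0)) atTop (nhds 0) := by
    have := ((hpow0.comp hdivtop).mul_const (maxGap x0)).const_mul 2
    simpa using this
  exact tendsto_of_tendsto_of_tendsto_of_le_of_le tendsto_const_nhds hlim
    (fun t => (hbound t).1) (fun t => (hbound t).2)
end

section
/- (Upper bound of Proposition 1.) Let x(0) be an ordered initial profile and μ ∈ (0, 1/2]. If ε > max_{i∈{1,…,n−1}} Σ_{j=0}^{i−1} μ^j · Δx_{i−j}(0), then the phone chain of closest drives the process to consensus: every opinion x_i(t) converges as t → ∞ to the common limit (1/n)·Σ_{j=1}^n x_j(0). -/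
open Filter

open Filter Finset

section WD

variable {n : ℕ} (hn : 2 ≤ n) (ε μ : ℝ) (x0 : Fin n → ℝ)

/-- ℕ-indexed opinions (clamped at the top). -/
noncomputable def wdXn (t i : ℕ) : ℝ :=
  wdTraj ε μ (phoneChain n hn) x0 t ⟨min i (n - 1), by omega⟩

/-- ℕ-indexed gaps. -/
noncomputable def wdG (t i : ℕ) : ℝ :=
  wdXn hn ε μ x0 t (i + 1) - wdXn hn ε μ x0 t i

lemma wdXn_fin (t : ℕ) (l : Fin n) :
    wdXn hn ε μ x0 t (l : ℕ) = wdTraj ε μ (phoneChain n hn) x0 t l := by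
  have : (⟨min (l : ℕ) (n - 1), by omega⟩ : Fin n) = l := by
    apply Fin.ext; simp only [Fin.val]
    have := l.isLt; omega
  rw [wdXn, this]

lemma wdG_zero_of_ge (t i : ℕ) (h : n - 1 ≤ i) : wdG hn ε μ x0 t i = 0 := by
  rw [wdG, wdXn, wdXn]
  have : (⟨min (i+1) (n-1), by omega⟩ : Fin n) = (⟨min i (n-1), by omega⟩ : Fin n) := by
    apply Fin.ext; simp only []; omega
  rw [this, sub_self]

lemma sum_update_fin (f : Fin n → ℝ) (i : Fin n) (a : ℝ) :
    ∑ j, Function.update f i a j = (∑ j, f j) + (a - f i) := by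
  rw [Finset.sum_update_of_mem (Finset.mem_univ i)]
  have := Finset.add_sum_erase Finset.univ f (Finset.mem_univ i)
  rw [← Finset.sdiff_singleton_eq_erase] at this
  linarith

end WD
lemma wdStep_left {n : ℕ} (ε μ : ℝ) (i j : Fin n) (x : Fin n → ℝ) (hij : i ≠ j)
    (h : |x i - x j| < ε) : wdStep ε μ i j x i = (1 - μ) * x i + μ * x j := by
  rw [wdStep, if_pos h, Function.update_of_ne hij, Function.update_self]

lemma wdStep_right {n : ℕ} (ε μ : ℝ) (i j : Fin n) (x : Fin n → ℝ)
    (h : |x i - x j| < ε) : wdStep ε μ i j x j = μ * x i + (1 - μ) * x j := by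
  rw [wdStep, if_pos h, Function.update_self]

lemma wdStep_other {n : ℕ} (ε μ : ℝ) (i j : Fin n) (x : Fin n → ℝ) (l : Fin n)
    (hl1 : l ≠ i) (hl2 : l ≠ j) : wdStep ε μ i j x l = x l := by
  rw [wdStep]
  split
  · rw [Function.update_of_ne hl2, Function.update_of_ne hl1]
  · rfl

section WD
variable {n : ℕ} (hn : 2 ≤ n) (ε μ : ℝ) (x0 : Fin n → ℝ)

lemma wdXn_step_a (t k : ℕ) (hk : k = t % (n - 1))
    (trig : |wdXn hn ε μ x0 t k - wdXn hn ε μ x0 t (k + 1)| < ε) :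
    wdXn hn ε μ x0 (t + 1) k
      = (1 - μ) * wdXn hn ε μ x0 t k + μ * wdXn hn ε μ x0 t (k + 1) := by
  have hklt : k < n - 1 := hk ▸ Nat.mod_lt _ (by omega)
  set iF : Fin n := ⟨k, by omega⟩ with hiF
  set jF : Fin n := ⟨k + 1, by omega⟩ with hjF
  have hik : (iF : ℕ) = k := rfl
  have hjk : (jF : ℕ) = k + 1 := rfl
  rw [← hik, ← hjk] at trig ⊢
  rw [wdXn_fin, wdXn_fin] at trig
  rw [wdXn_fin, wdXn_fin, wdXn_fin]
  have hPC : phoneChain n hn t = (iF, jF) := by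
    rw [phoneChain]
    refine Prod.ext ?_ ?_ <;> (apply Fin.ext; simp only [hiF, hjF]; omega)
  show wdStep ε μ (phoneChain n hn t).1 (phoneChain n hn t).2 _ iF = _
  rw [hPC]
  exact wdStep_left ε μ iF jF _ (by apply Fin.ne_of_val_ne; simp [hiF, hjF]) trig

lemma wdXn_step_b (t k : ℕ) (hk : k = t % (n - 1))
    (trig : |wdXn hn ε μ x0 t k - wdXn hn ε μ x0 t (k + 1)| < ε) :
    wdXn hn ε μ x0 (t + 1) (k + 1)
      = μ * wdXn hn ε μ x0 t k + (1 - μ) * wdXn hn ε μ x0 t (k + 1) := by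
  have hklt : k < n - 1 := hk ▸ Nat.mod_lt _ (by omega)
  set iF : Fin n := ⟨k, by omega⟩ with hiF
  set jF : Fin n := ⟨k + 1, by omega⟩ with hjF
  have hik : (iF : ℕ) = k := rfl
  have hjk : (jF : ℕ) = k + 1 := rfl
  rw [← hik, ← hjk] at trig ⊢
  rw [wdXn_fin, wdXn_fin] at trig
  rw [wdXn_fin, wdXn_fin, wdXn_fin]
  have hPC : phoneChain n hn t = (iF, jF) := by
    rw [phoneChain]
    refine Prod.ext ?_ ?_ <;> (apply Fin.ext; simp only [hiF, hjF]; omega)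
  show wdStep ε μ (phoneChain n hn t).1 (phoneChain n hn t).2 _ jF = _
  rw [hPC]
  exact wdStep_right ε μ iF jF _ trig

lemma wdXn_step_o (t k i : ℕ) (hk : k = t % (n - 1))
    (h1 : min i (n - 1) ≠ k) (h2 : min i (n - 1) ≠ k + 1) :
    wdXn hn ε μ x0 (t + 1) i = wdXn hn ε μ x0 t i := by
  rw [wdXn, wdXn]
  show wdStep ε μ (phoneChain n hn t).1 (phoneChain n hn t).2 _ _ = _
  apply wdStep_other
  · apply Fin.ne_of_val_ne
    show min i (n-1) ≠ t % (n-1)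
    omega
  · apply Fin.ne_of_val_ne
    show min i (n-1) ≠ t % (n-1) + 1
    omega
end WD
section WD2
variable {n : ℕ} (hn : 2 ≤ n) (ε μ : ℝ) (x0 : Fin n → ℝ)

lemma wdG_step_k (t k : ℕ) (hk : k = t % (n - 1))
    (trig : |wdXn hn ε μ x0 t k - wdXn hn ε μ x0 t (k + 1)| < ε) :
    wdG hn ε μ x0 (t + 1) k = (1 - 2 * μ) * wdG hn ε μ x0 t k := by
  rw [wdG, wdG, wdXn_step_a hn ε μ x0 t k hk trig, wdXn_step_b hn ε μ x0 t k hk trig]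
  ring

lemma wdG_step_km (t k : ℕ) (hk : k = t % (n - 1)) (hk1 : 1 ≤ k)
    (trig : |wdXn hn ε μ x0 t k - wdXn hn ε μ x0 t (k + 1)| < ε) :
    wdG hn ε μ x0 (t + 1) (k - 1)
      = wdG hn ε μ x0 t (k - 1) + μ * wdG hn ε μ x0 t k := by
  have hklt : k < n - 1 := hk ▸ Nat.mod_lt _ (by omega)
  have e1 : k - 1 + 1 = k := by omega
  rw [wdG, wdG, wdG, e1, wdXn_step_a hn ε μ x0 t k hk trig,
    wdXn_step_o hn ε μ x0 t k (k-1) hk (by omega) (by omega)]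
  ring

lemma wdG_step_kp (t k : ℕ) (hk : k = t % (n - 1)) (hk2 : k + 1 < n - 1)
    (trig : |wdXn hn ε μ x0 t k - wdXn hn ε μ x0 t (k + 1)| < ε) :
    wdG hn ε μ x0 (t + 1) (k + 1)
      = wdG hn ε μ x0 t (k + 1) + μ * wdG hn ε μ x0 t k := by
  rw [wdG, wdG, wdG, wdXn_step_b hn ε μ x0 t k hk trig,
    wdXn_step_o hn ε μ x0 t k (k+1+1) hk (by omega) (by omega)]
  ring

lemma wdG_step_far (t k i : ℕ) (hk : k = t % (n - 1))
    (hi : i + 1 < k ∨ k + 1 < i) :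
    wdG hn ε μ x0 (t + 1) i = wdG hn ε μ x0 t i := by
  have hklt : k < n - 1 := hk ▸ Nat.mod_lt _ (by omega)
  rcases le_or_gt (n - 1) i with h | h
  · rw [wdG_zero_of_ge hn ε μ x0 _ _ h, wdG_zero_of_ge hn ε μ x0 _ _ h]
  · rw [wdG, wdG, wdXn_step_o hn ε μ x0 t k (i+1) hk (by omega) (by omega),
      wdXn_step_o hn ε μ x0 t k i hk (by omega) (by omega)]

lemma wdXn_step_bot (t k : ℕ) (hk : k = t % (n - 1)) (hμ0 : 0 ≤ μ)
    (hg : 0 ≤ wdG hn ε μ x0 t k)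
    (trig : |wdXn hn ε μ x0 t k - wdXn hn ε μ x0 t (k + 1)| < ε) :
    wdXn hn ε μ x0 t 0 ≤ wdXn hn ε μ x0 (t + 1) 0 := by
  have hklt : k < n - 1 := hk ▸ Nat.mod_lt _ (by omega)
  rcases Nat.eq_zero_or_pos k with h0 | h0
  · subst h0
    rw [wdXn_step_a hn ε μ x0 t 0 hk trig]
    have := hg
    rw [wdG] at this
    nlinarith
  · rw [wdXn_step_o hn ε μ x0 t k 0 hk (by omega) (by omega)]

lemma wdXn_step_top_eq (t k : ℕ) (hk : k = t % (n - 1)) (hktop : k + 1 = n - 1)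
    (trig : |wdXn hn ε μ x0 t k - wdXn hn ε μ x0 t (k + 1)| < ε) :
    wdXn hn ε μ x0 (t + 1) (n - 1)
      = wdXn hn ε μ x0 t (n - 1) - μ * wdG hn ε μ x0 t k := by
  rw [← hktop, wdXn_step_b hn ε μ x0 t k hk trig, wdG]
  ring

lemma wdXn_step_top (t k : ℕ) (hk : k = t % (n - 1)) (hμ0 : 0 ≤ μ)
    (hg : 0 ≤ wdG hn ε μ x0 t k)
    (trig : |wdXn hn ε μ x0 t k - wdXn hn ε μ x0 t (k + 1)| < ε) :
    wdXn hn ε μ x0 (t + 1) (n - 1) ≤ wdXn hn ε μ x0 t (n - 1) := by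
  have hklt : k < n - 1 := hk ▸ Nat.mod_lt _ (by omega)
  rcases eq_or_lt_of_le (show k + 1 ≤ n - 1 by omega) with h0 | h0
  · rw [wdXn_step_top_eq hn ε μ x0 t k hk h0 trig]
    nlinarith
  · rw [wdXn_step_o hn ε μ x0 t k (n-1) hk (by omega) (by omega)]

lemma wdSum_step (t k : ℕ) (hk : k = t % (n - 1))
    (trig : |wdXn hn ε μ x0 t k - wdXn hn ε μ x0 t (k + 1)| < ε) :
    ∑ j, wdTraj ε μ (phoneChain n hn) x0 (t + 1) j
      = ∑ j, wdTraj ε μ (phoneChain n hn) x0 t j := by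
  have hklt : k < n - 1 := hk ▸ Nat.mod_lt _ (by omega)
  set iF : Fin n := ⟨k, by omega⟩ with hiF
  set jF : Fin n := ⟨k + 1, by omega⟩ with hjF
  have hik : (iF : ℕ) = k := rfl
  have hjk : (jF : ℕ) = k + 1 := rfl
  rw [← hik, ← hjk] at trig
  rw [wdXn_fin, wdXn_fin] at trig
  have hPC : phoneChain n hn t = (iF, jF) := by
    rw [phoneChain]
    refine Prod.ext ?_ ?_ <;> (apply Fin.ext; simp only [hiF, hjF]; omega)
  have hne : jF ≠ iF := by apply Fin.ne_of_val_ne; simp [hiF, hjF]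
  show ∑ j, wdStep ε μ (phoneChain n hn t).1 (phoneChain n hn t).2 _ j = _
  rw [hPC]
  set f := wdTraj ε μ (phoneChain n hn) x0 t with hf
  rw [wdStep, if_pos trig]
  rw [sum_update_fin, sum_update_fin, Function.update_of_ne hne]
  ring

lemma wdG_step_nonneg (t k : ℕ) (hk : k = t % (n - 1)) (hμ0 : 0 ≤ μ) (hμ : μ ≤ 1/2)
    (hg : ∀ i, 0 ≤ wdG hn ε μ x0 t i)
    (trig : |wdXn hn ε μ x0 t k - wdXn hn ε μ x0 t (k + 1)| < ε) :
    ∀ i, 0 ≤ wdG hn ε μ x0 (t + 1) i := by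
  intro i
  have hklt : k < n - 1 := hk ▸ Nat.mod_lt _ (by omega)
  rcases le_or_gt (n-1) i with h | h
  · rw [wdG_zero_of_ge hn ε μ x0 _ _ h]
  rcases eq_or_ne i k with rfl | h1
  · rw [wdG_step_k hn ε μ x0 t i hk trig]
    have := hg i; nlinarith
  rcases eq_or_ne (i+1) k with h2 | h2
  · have : i = k - 1 := by omega
    subst this
    rw [wdG_step_km hn ε μ x0 t k hk (by omega) trig]
    have := hg (k-1); have := hg k; nlinarith
  rcases eq_or_ne i (k+1) with rfl | h3
  · rw [wdG_step_kp hn ε μ x0 t k hk (by omega) trig]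
    have := hg (k+1); have := hg k; nlinarith
  · rw [wdG_step_far hn ε μ x0 t k i hk (by omega)]
    exact hg i
end WD2
lemma geom_peel (μ : ℝ) (f : ℕ → ℝ) (K : ℕ) :
    ∑ j ∈ Finset.range (K + 1), μ ^ j * f j
      = f 0 + μ * ∑ j ∈ Finset.range K, μ ^ j * f (j + 1) := by
  rw [Finset.sum_range_succ', Finset.mul_sum]
  have h : ∀ j ∈ Finset.range K, μ ^ (j+1) * f (j+1) = μ * (μ ^ j * f (j+1)) :=
    fun j _ => by ring
  rw [Finset.sum_congr rfl h]
  simp [add_comm]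

section WD3
variable {n : ℕ} (hn : 2 ≤ n) (ε μ : ℝ) (x0 : Fin n → ℝ)

/-- `wdF k t i` : the mixed bound quantity `Σ_{j=0}^{e(i,k)} μ^j g_{i-j}(t)`. -/
noncomputable def wdF (k t i : ℕ) : ℝ :=
  ∑ j ∈ Finset.range ((if k ≤ i then i - k else i) + 1),
    μ ^ j * wdG hn ε μ x0 t (i - j)

/-- The master invariant. -/
def wdInv (C : ℝ) (t : ℕ) : Prop :=
  (∀ i, 0 ≤ wdG hn ε μ x0 t i) ∧
  (∑ j, wdTraj ε μ (phoneChain n hn) x0 t j = ∑ j, x0 j) ∧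
  (∀ i, i < n - 1 → wdF hn ε μ x0 (t % (n-1)) t i
      ≤ (if i + 1 = t % (n-1) then (1-μ)*C else C))

lemma wdF_self (k t : ℕ) : wdF hn ε μ x0 k t k = wdG hn ε μ x0 t k := by
  rw [wdF, if_pos le_rfl, Nat.sub_self]
  simp

lemma wdInv_trig {C : ℝ} {t : ℕ} (hC : C < ε) (hI : wdInv hn ε μ x0 C t) :
    |wdXn hn ε μ x0 t (t % (n-1)) - wdXn hn ε μ x0 t (t % (n-1) + 1)| < ε := by
  obtain ⟨hg, -, hBd⟩ := hI
  set k := t % (n - 1) with hk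
  have hklt : k < n - 1 := Nat.mod_lt _ (by omega)
  have h1 : wdG hn ε μ x0 t k ≤ C := by
    have h := hBd k hklt
    rw [wdF_self] at h
    rwa [if_neg (by omega)] at h
  have h2 : 0 ≤ wdG hn ε μ x0 t k := hg k
  rw [wdG] at h1 h2
  rw [abs_sub_comm, abs_of_nonneg (by linarith)]
  linarith

section identities
variable (t k0 : ℕ) (hk : k0 + 1 = t % (n-1))
  (trig : |wdXn hn ε μ x0 t (t % (n-1)) - wdXn hn ε μ x0 t (t % (n-1) + 1)| < ε)

include hk trig in
lemma wd_id_S :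
    ∑ j ∈ Finset.range k0, μ ^ j * wdG hn ε μ x0 (t+1) (k0 - (j+1))
      = ∑ j ∈ Finset.range k0, μ ^ j * wdG hn ε μ x0 t (k0 - (j+1)) := by
  refine Finset.sum_congr rfl fun j hj => ?_
  rw [Finset.mem_range] at hj
  rw [wdG_step_far hn ε μ x0 t (k0+1) (k0 - (j+1)) hk (by omega)]

include hk trig in
lemma wd_id_case2 :
    ∑ j ∈ Finset.range (k0 + 1), μ ^ j * wdG hn ε μ x0 (t+1) (k0 - j)
      = (∑ j ∈ Finset.range (k0 + 1), μ ^ j * wdG hn ε μ x0 t (k0 - j))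
        + μ * wdG hn ε μ x0 t (k0 + 1) := by
  have trig' : |wdXn hn ε μ x0 t (k0+1) - wdXn hn ε μ x0 t (k0+1+1)| < ε := by
    rw [hk]; exact trig
  rw [geom_peel μ (fun j => wdG hn ε μ x0 (t+1) (k0 - j)) k0,
      geom_peel μ (fun j => wdG hn ε μ x0 t (k0 - j)) k0]
  simp only [Nat.sub_zero]
  rw [wd_id_S hn ε μ x0 t k0 hk trig]
  have h0 : wdG hn ε μ x0 (t+1) k0 = wdG hn ε μ x0 t k0 + μ * wdG hn ε μ x0 t (k0+1) := by
    have := wdG_step_km hn ε μ x0 t (k0+1) hk (by omega) trig'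
    simpa using this
  rw [h0]; ring

include hk trig in
lemma wd_id_case1 :
    ∑ j ∈ Finset.range (k0 + 2), μ ^ j * wdG hn ε μ x0 (t+1) (k0 + 1 - j)
      = (1 - 2*μ + μ^2) * wdG hn ε μ x0 t (k0+1)
        + μ * ∑ j ∈ Finset.range (k0 + 1), μ ^ j * wdG hn ε μ x0 t (k0 - j) := by
  have trig' : |wdXn hn ε μ x0 t (k0+1) - wdXn hn ε μ x0 t (k0+1+1)| < ε := by
    rw [hk]; exact trig
  have hpeel := geom_peel μ (fun j => wdG hn ε μ x0 (t+1) (k0 + 1 - j)) (k0+1)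
  simp only [Nat.sub_zero] at hpeel
  rw [hpeel]
  have hin : ∀ j ∈ Finset.range (k0+1),
      μ ^ j * wdG hn ε μ x0 (t+1) (k0 + 1 - (j+1))
        = μ ^ j * wdG hn ε μ x0 (t+1) (k0 - j) := by
    intro j hj
    have e : k0 + 1 - (j+1) = k0 - j := by omega
    rw [e]
  rw [Finset.sum_congr rfl hin, wd_id_case2 hn ε μ x0 t k0 hk trig,
      wdG_step_k hn ε μ x0 t (k0+1) hk trig']
  ring

end identities

lemma wd_id_case5 (t k i : ℕ) (hk : k = t % (n-1)) (hik : i + 1 < k) :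
    ∑ j ∈ Finset.range (i + 1), μ ^ j * wdG hn ε μ x0 (t+1) (i - j)
      = ∑ j ∈ Finset.range (i + 1), μ ^ j * wdG hn ε μ x0 t (i - j) := by
  refine Finset.sum_congr rfl fun j hj => ?_
  rw [wdG_step_far hn ε μ x0 t k (i - j) hk (by omega)]

lemma wd_id_case4 (t k d : ℕ) (hk : k = t % (n-1)) (hd : k + 2 + d < n - 1)
    (trig : |wdXn hn ε μ x0 t (t % (n-1)) - wdXn hn ε μ x0 t (t % (n-1) + 1)| < ε) :
    ∑ j ∈ Finset.range (d + 2), μ ^ j * wdG hn ε μ x0 (t+1) (k + 2 + d - j)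
      = ∑ j ∈ Finset.range (d + 3), μ ^ j * wdG hn ε μ x0 t (k + 2 + d - j) := by
  rw [← hk] at trig
  rw [show d + 2 = d + 1 + 1 from rfl, show d + 3 = d + 1 + 1 + 1 from rfl]
  simp only [Finset.sum_range_succ]
  have h1 : ∀ j ∈ Finset.range d,
      μ ^ j * wdG hn ε μ x0 (t+1) (k + 2 + d - j) = μ ^ j * wdG hn ε μ x0 t (k + 2 + d - j) := by
    intro j hj
    rw [Finset.mem_range] at hj
    rw [wdG_step_far hn ε μ x0 t k (k+2+d-j) hk (by omega)]
  rw [Finset.sum_congr rfl h1]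
  have e1 : k + 2 + d - (d + 1) = k + 1 := by omega
  have e0 : k + 2 + d - d = k + 2 := by omega
  have e2 : k + 2 + d - (d + 1 + 1) = k := by omega
  rw [e0, e1, e2, wdG_step_kp hn ε μ x0 t k hk (by omega) trig,
      wdG_step_far hn ε μ x0 t k (k+2) hk (by omega)]
  ring

end WD3
section WD4
variable {n : ℕ} (hn : 2 ≤ n) (ε μ : ℝ) (x0 : Fin n → ℝ)

lemma fin_mk_eq (f : Fin n → ℝ) (a b : ℕ) (ha : a < n) (hb : b < n) (h : a = b) :
    f ⟨a, ha⟩ = f ⟨b, hb⟩ := by subst h; rfl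

lemma wdInv_zero {C : ℝ} (hord : Monotone x0)
    (hC : ∀ i : Fin (n-1), chainBound μ x0 i ≤ C) :
    wdInv hn ε μ x0 C 0 := by
  have hg : ∀ i, 0 ≤ wdG hn ε μ x0 0 i := by
    intro i
    rcases le_or_gt (n-1) i with h | h
    · rw [wdG_zero_of_ge hn ε μ x0 0 i h]
    · rw [wdG, wdXn, wdXn]
      have : (⟨min i (n-1), by omega⟩ : Fin n) ≤ ⟨min (i+1) (n-1), by omega⟩ := by
        rw [Fin.mk_le_mk]; omega
      have := hord this
      show (0:ℝ) ≤ x0 _ - x0 _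
      linarith [this]
  refine ⟨hg, rfl, ?_⟩
  intro i hi
  rw [Nat.zero_mod, if_neg (by omega)]
  have key : wdF hn ε μ x0 0 0 i = chainBound μ x0 ⟨i, hi⟩ := by
    rw [wdF, if_pos (Nat.zero_le _), Nat.sub_zero, chainBound]
    refine Finset.sum_congr rfl fun j hj => ?_
    rw [Finset.mem_range] at hj
    congr 1
    rw [wdG, wdXn, wdXn, gap]
    show x0 ⟨min (i-j+1) (n-1), by omega⟩ - x0 ⟨min (i-j) (n-1), by omega⟩ = _
    rw [fin_mk_eq x0 (min (i-j+1) (n-1)) (i-j+1) (by omega) (by omega) (by omega),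
        fin_mk_eq x0 (min (i-j) (n-1)) (i-j) (by omega) (by omega) (by omega)]
  rw [key]
  exact hC ⟨i, hi⟩

lemma wdInv_step {C : ℝ} (hμ0 : 0 < μ) (hμ : μ ≤ 1/2) (hC0 : 0 ≤ C) (hCε : C < ε)
    (t : ℕ) (hI : wdInv hn ε μ x0 C t) : wdInv hn ε μ x0 C (t + 1) := by
  have trig := wdInv_trig hn ε μ x0 hCε hI
  obtain ⟨hg, hsum, hBd⟩ := hI
  obtain ⟨k, hk⟩ : ∃ k, k = t % (n-1) := ⟨_, rfl⟩
  rw [← hk] at hBd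
  have trigk : |wdXn hn ε μ x0 t k - wdXn hn ε μ x0 t (k + 1)| < ε := by
    rw [hk]; exact trig
  have hklt : k < n - 1 := by rw [hk]; exact Nat.mod_lt _ (by omega)
  have hGk : wdG hn ε μ x0 t k ≤ C := by
    have h := hBd k hklt
    rw [wdF_self] at h
    rwa [if_neg (by omega)] at h
  have hknext : (t+1) % (n-1) = k + 1 ∨ ((t+1) % (n-1) = 0 ∧ k + 1 = n - 1) := by
    have hmm : (k + 1) % (n-1) = (t + 1) % (n-1) := by
      rw [hk]; exact Nat.mod_add_mod t (n-1) 1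
    rcases eq_or_ne (k+1) (n-1) with h | h
    · right
      refine ⟨?_, h⟩
      rw [← hmm, h, Nat.mod_self]
    · left
      rw [← hmm, Nat.mod_eq_of_lt (by omega)]
  have htgt : ∀ i : ℕ, i ≠ k → (if i + 1 = (t+1) % (n-1) then (1-μ)*C else C) = C := by
    intro i hik
    rw [if_neg ?_]
    rcases hknext with h | ⟨h, h2⟩ <;> omega
  have htgt2 : (1-μ)*C ≤ (if k + 1 = (t+1) % (n-1) then (1-μ)*C else C) := by
    split_ifs
    · exact le_rfl
    · nlinarith
  refine ⟨wdG_step_nonneg hn ε μ x0 t k hk hμ0.le hμ hg trigk, ?_, ?_⟩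
  · rw [wdSum_step hn ε μ x0 t k hk trigk]; exact hsum
  intro i hi
  rcases lt_trichotomy i k with hik | rfl | hik
  · -- i < k
    have hE : (if (t+1) % (n-1) ≤ i then i - (t+1) % (n-1) else i) = i := by
      rcases hknext with h | ⟨h, h2⟩ <;> (rw [h]; split_ifs <;> omega)
    rw [wdF, hE, htgt i (by omega)]
    rcases eq_or_ne (i+1) k with hik1 | hik1
    · -- i = k - 1
      rw [wd_id_case2 hn ε μ x0 t i (by omega) trig]
      have hold : wdF hn ε μ x0 k t i
          = ∑ j ∈ Finset.range (i + 1), μ ^ j * wdG hn ε μ x0 t (i - j) := by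
        rw [wdF, if_neg (by omega)]
      have h1 : wdF hn ε μ x0 k t i ≤ (1-μ)*C := by
        have h := hBd i hi
        rwa [if_pos (by omega)] at h
      rw [← hold]
      have h2 : wdG hn ε μ x0 t (i+1) ≤ C := by rw [hik1]; exact hGk
      have h3 : 0 ≤ wdG hn ε μ x0 t (i+1) := hg _
      nlinarith
    · -- i + 1 < k
      rw [wd_id_case5 hn ε μ x0 t k i hk (by omega)]
      have hold : wdF hn ε μ x0 k t i
          = ∑ j ∈ Finset.range (i + 1), μ ^ j * wdG hn ε μ x0 t (i - j) := by
        rw [wdF, if_neg (by omega)]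
      rw [← hold]
      have h := hBd i hi
      rwa [if_neg (by omega)] at h
  · -- i = k
    have hE : (if (t+1) % (n-1) ≤ i then i - (t+1) % (n-1) else i) = i := by
      rcases hknext with h | ⟨h, h2⟩ <;> (rw [h]; split_ifs <;> omega)
    rw [wdF, hE]
    refine le_trans ?_ htgt2
    rcases Nat.eq_zero_or_pos i with rfl | hkpos
    · simp only [zero_add, Finset.sum_range_one, pow_zero, one_mul, Nat.sub_zero]
      rw [wdG_step_k hn ε μ x0 t 0 hk trigk]
      have h0 := hg 0
      nlinarith
    · obtain ⟨k0, rfl⟩ : ∃ k0, i = k0 + 1 := ⟨i-1, by omega⟩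
      rw [show k0 + 1 + 1 = k0 + 2 from rfl,
        wd_id_case1 hn ε μ x0 t k0 (by omega) trig]
      have hold : wdF hn ε μ x0 (k0+1) t k0
          = ∑ j ∈ Finset.range (k0 + 1), μ ^ j * wdG hn ε μ x0 t (k0 - j) := by
        rw [wdF, if_neg (by omega)]
      have h1 : wdF hn ε μ x0 (k0+1) t k0 ≤ (1-μ)*C := by
        have h := hBd k0 (by omega)
        rwa [if_pos (by omega)] at h
      rw [← hold]
      have h2 : 0 ≤ wdG hn ε μ x0 t (k0+1) := hg _
      nlinarith
  · -- i > k
    have hk1n : k + 1 < n - 1 := by omega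
    rcases eq_or_ne i (k+1) with rfl | hik2
    · -- i = k + 1
      have hE : (if (t+1) % (n-1) ≤ k+1 then k + 1 - (t+1) % (n-1) else k+1) = 0 := by
        rcases hknext with h | ⟨h, h2⟩ <;> (rw [h]; split_ifs <;> omega)
      rw [wdF, hE, htgt (k+1) (by omega)]
      simp only [zero_add, Finset.sum_range_one, pow_zero, one_mul, Nat.sub_zero]
      rw [wdG_step_kp hn ε μ x0 t k hk hk1n trigk]
      have hold : wdF hn ε μ x0 k t (k+1)
          = wdG hn ε μ x0 t (k+1) + μ * wdG hn ε μ x0 t k := by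
        rw [wdF, if_pos (by omega), show k + 1 - k = 1 from by omega]
        simp [Finset.sum_range_succ, Finset.sum_range_one]
      have h := hBd (k+1) hi
      rw [if_neg (by omega), hold] at h
      linarith
    · -- i ≥ k + 2
      obtain ⟨d, rfl⟩ : ∃ d, i = k + 2 + d := ⟨i - k - 2, by omega⟩
      have hE : (if (t+1) % (n-1) ≤ k+2+d then k + 2 + d - (t+1) % (n-1) else k+2+d)
          = d + 1 := by
        rcases hknext with h | ⟨h, h2⟩ <;> (rw [h]; split_ifs <;> omega)
      rw [wdF, hE, htgt (k+2+d) (by omega),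
        show d + 1 + 1 = d + 2 from rfl,
        wd_id_case4 hn ε μ x0 t k d hk (by omega) trig]
      have hold : wdF hn ε μ x0 k t (k+2+d)
          = ∑ j ∈ Finset.range (d + 3), μ ^ j * wdG hn ε μ x0 t (k + 2 + d - j) := by
        rw [wdF, if_pos (by omega), show k + 2 + d - k = d + 2 from by omega]
      rw [← hold]
      have h := hBd (k+2+d) hi
      rwa [if_neg (by omega)] at h

lemma wdInv_all {C : ℝ} (hμ0 : 0 < μ) (hμ : μ ≤ 1/2) (hC0 : 0 ≤ C) (hCε : C < ε)
    (hord : Monotone x0) (hC : ∀ i : Fin (n-1), chainBound μ x0 i ≤ C) :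
    ∀ t, wdInv hn ε μ x0 C t := by
  intro t
  induction t with
  | zero => exact wdInv_zero hn ε μ x0 hord hC
  | succ t ih => exact wdInv_step hn ε μ x0 hμ0 hμ hC0 hCε t ih
end WD4
section WD5
variable {n : ℕ} (hn : 2 ≤ n) (ε μ : ℝ) (x0 : Fin n → ℝ)

/-- Spread of the profile. -/
noncomputable def wdS (t : ℕ) : ℝ :=
  wdXn hn ε μ x0 t (n-1) - wdXn hn ε μ x0 t 0

lemma wdS_def (t : ℕ) : wdS hn ε μ x0 t
    = wdXn hn ε μ x0 t (n-1) - wdXn hn ε μ x0 t 0 := rfl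

lemma wdG_telescope (t K : ℕ) :
    ∑ i ∈ Finset.range K, wdG hn ε μ x0 t i
      = wdXn hn ε μ x0 t K - wdXn hn ε μ x0 t 0 :=
  Finset.sum_range_sub (wdXn hn ε μ x0 t) K

variable {C : ℝ} (hμ0 : 0 < μ) (hμ : μ ≤ 1/2) (hCε : C < ε)
  (hInv : ∀ t, wdInv hn ε μ x0 C t)

include hInv in
lemma wdS_nonneg (t : ℕ) : 0 ≤ wdS hn ε μ x0 t := by
  rw [wdS, ← wdG_telescope]
  exact Finset.sum_nonneg fun i _ => (hInv t).1 i

include hμ0 hCε hInv in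
lemma wdS_step (t : ℕ) : wdS hn ε μ x0 (t+1) ≤ wdS hn ε μ x0 t := by
  obtain ⟨hg, -, -⟩ := hInv t
  have trig := wdInv_trig hn ε μ x0 hCε (hInv t)
  have h1 := wdXn_step_bot hn ε μ x0 t (t % (n-1)) rfl hμ0.le (hg _) trig
  have h2 := wdXn_step_top hn ε μ x0 t (t % (n-1)) rfl hμ0.le (hg _) trig
  rw [wdS, wdS]; linarith

include hμ0 hCε hInv in
lemma wdS_anti : ∀ s t : ℕ, s ≤ t → wdS hn ε μ x0 t ≤ wdS hn ε μ x0 s := by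
  intro s t h
  induction t, h using Nat.le_induction with
  | base => exact le_refl _
  | succ t ht ih => exact le_trans (wdS_step hn ε μ x0 hμ0 hCε hInv t) ih

lemma wdG_unchanged (t0 : ℕ) (ht0 : t0 % (n-1) = 0) :
    ∀ r i : ℕ, r < i → i < n - 1 → wdG hn ε μ x0 (t0 + r) i = wdG hn ε μ x0 t0 i := by
  intro r
  induction r with
  | zero => intro i _ _; rfl
  | succ r ih =>
    intro i hri hi
    have hr1 : r % (n-1) = r := Nat.mod_eq_of_lt (by omega)
    have hmod : (t0 + r) % (n-1) = r := by
      rw [Nat.add_mod, ht0, zero_add, hr1, hr1]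
    have := wdG_step_far hn ε μ x0 (t0 + r) r i hmod.symm (by omega)
    rw [show t0 + (r+1) = (t0 + r) + 1 from rfl, this]
    exact ih i (by omega) hi

include hμ0 hCε hInv in
lemma wdG_growth (t0 : ℕ) (ht0 : t0 % (n-1) = 0) :
    ∀ s, s < n - 1 → ∀ k, k ≤ s →
      μ ^ (s - k) * wdG hn ε μ x0 t0 k ≤ wdG hn ε μ x0 (t0 + s) s := by
  intro s
  induction s with
  | zero =>
    intro _ k hk
    have : k = 0 := by omega
    subst this
    simp
  | succ s ih =>
    intro hs1 k hk
    have hr1 : s % (n-1) = s := Nat.mod_eq_of_lt (by omega)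
    have hmod : (t0 + s) % (n-1) = s := by
      rw [Nat.add_mod, ht0, zero_add, hr1, hr1]
    have trig := wdInv_trig hn ε μ x0 hCε (hInv (t0+s))
    rw [hmod] at trig
    have hstep := wdG_step_kp hn ε μ x0 (t0+s) s hmod.symm hs1 trig
    have hgs : 0 ≤ wdG hn ε μ x0 (t0+s) s := (hInv (t0+s)).1 s
    have hgs1 : 0 ≤ wdG hn ε μ x0 (t0+s) (s+1) := (hInv (t0+s)).1 (s+1)
    rcases eq_or_lt_of_le hk with rfl | hks
    · -- k = s + 1
      have hu : wdG hn ε μ x0 (t0 + s) (s+1) = wdG hn ε μ x0 t0 (s+1) :=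
        wdG_unchanged hn ε μ x0 t0 ht0 s (s+1) (by omega) hs1
      rw [Nat.sub_self, pow_zero, one_mul,
        show t0 + (s+1) = (t0 + s) + 1 from rfl, hstep, ← hu]
      nlinarith
    · -- k ≤ s
      have hks' : k ≤ s := by omega
      have hIH := ih (by omega) k hks'
      have hg0 : 0 ≤ wdG hn ε μ x0 t0 k := (hInv t0).1 k
      rw [show s + 1 - k = (s - k) + 1 from by omega, pow_succ,
        show t0 + (s+1) = (t0 + s) + 1 from rfl, hstep]
      nlinarith

include hμ0 hμ hCε hInv in
lemma wdS_round (t0 : ℕ) (ht0 : t0 % (n-1) = 0) :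
    wdS hn ε μ x0 (t0 + (n-1))
      ≤ (1 - μ ^ (n-1) / ((n-1 : ℕ) : ℝ)) * wdS hn ε μ x0 t0 := by
  have hm1 : 1 ≤ n - 1 := by omega
  have hmR : (0:ℝ) < ((n-1 : ℕ) : ℝ) := by
    have : (0:ℕ) < n - 1 := by omega
    exact_mod_cast this
  obtain ⟨k, hkmem, hkS⟩ : ∃ k ∈ Finset.range (n-1),
      wdS hn ε μ x0 t0 / ((n-1:ℕ):ℝ) ≤ wdG hn ε μ x0 t0 k := by
    apply Finset.exists_le_of_sum_le ⟨0, Finset.mem_range.2 (by omega)⟩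
    rw [Finset.sum_const, Finset.card_range, nsmul_eq_mul, wdG_telescope,
      mul_div_cancel₀ _ (ne_of_gt hmR)]
    exact le_of_eq rfl
  rw [Finset.mem_range] at hkmem
  have hgrow := wdG_growth hn ε μ x0 hμ0 hCε hInv t0 ht0 (n-1-1) (by omega) k (by omega)
  have hr1 : (n-1-1) % (n-1) = n-1-1 := Nat.mod_eq_of_lt (by omega)
  have hmod : (t0 + (n-1-1)) % (n-1) = n-1-1 := by
    rw [Nat.add_mod, ht0, zero_add, hr1, hr1]
  have trig := wdInv_trig hn ε μ x0 hCε (hInv (t0 + (n-1-1)))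
  rw [hmod] at trig
  have htop := wdXn_step_top_eq hn ε μ x0 (t0+(n-1-1)) (n-1-1) hmod.symm (by omega) trig
  have hbot := wdXn_step_bot hn ε μ x0 (t0+(n-1-1)) (n-1-1) hmod.symm hμ0.le
    ((hInv _).1 _) trig
  have hanti := wdS_anti hn ε μ x0 hμ0 hCε hInv t0 (t0 + (n-1-1)) (Nat.le_add_right _ _)
  have heq : t0 + (n-1) = (t0 + (n-1-1)) + 1 := by omega
  have hμ1 : μ ≤ 1 := by linarith
  have hpow : μ ^ (n-1) ≤ μ * μ ^ (n-1-1-k) := by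
    rw [show μ * μ ^ (n-1-1-k) = μ ^ ((n-1-1-k)+1) from by rw [pow_succ]; ring]
    exact pow_le_pow_of_le_one hμ0.le hμ1 (by omega)
  have hg0 : 0 ≤ wdG hn ε μ x0 t0 k := (hInv t0).1 k
  have hS0 : 0 ≤ wdS hn ε μ x0 t0 := wdS_nonneg hn ε μ x0 hInv t0
  have hSdiv : 0 ≤ wdS hn ε μ x0 t0 / ((n-1:ℕ):ℝ) := by positivity
  have key : μ ^ (n-1) * (wdS hn ε μ x0 t0 / ((n-1:ℕ):ℝ))
      ≤ μ * wdG hn ε μ x0 (t0+(n-1-1)) (n-1-1) := by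
    calc μ ^ (n-1) * (wdS hn ε μ x0 t0 / ((n-1:ℕ):ℝ))
        ≤ (μ * μ ^ (n-1-1-k)) * (wdS hn ε μ x0 t0 / ((n-1:ℕ):ℝ)) :=
          mul_le_mul_of_nonneg_right hpow hSdiv
      _ ≤ (μ * μ ^ (n-1-1-k)) * wdG hn ε μ x0 t0 k :=
          mul_le_mul_of_nonneg_left hkS (by positivity)
      _ = μ * (μ ^ (n-1-1-k) * wdG hn ε μ x0 t0 k) := by ring
      _ ≤ μ * wdG hn ε μ x0 (t0+(n-1-1)) (n-1-1) :=
          mul_le_mul_of_nonneg_left hgrow hμ0.le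
  rw [wdS_def] at hanti
  rw [heq, wdS_def, htop,
    show (1 - μ ^ (n-1) / ((n-1:ℕ):ℝ)) * wdS hn ε μ x0 t0
      = wdS hn ε μ x0 t0 - μ ^ (n-1) * (wdS hn ε μ x0 t0 / ((n-1:ℕ):ℝ)) from by ring]
  linarith

include hμ0 hμ hCε hInv in
lemma wdS_pow : ∀ q : ℕ, wdS hn ε μ x0 ((n-1) * q)
    ≤ (1 - μ ^ (n-1) / ((n-1 : ℕ) : ℝ)) ^ q * wdS hn ε μ x0 0 := by
  have hm1 : 1 ≤ n - 1 := by omega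
  have hmR : (1:ℝ) ≤ ((n-1 : ℕ) : ℝ) := by exact_mod_cast hm1
  have hρ0 : 0 ≤ 1 - μ ^ (n-1) / ((n-1 : ℕ) : ℝ) := by
    have h1 : μ ^ (n-1) ≤ 1 := pow_le_one₀ hμ0.le (by linarith)
    have h2 : μ ^ (n-1) / ((n-1:ℕ):ℝ) ≤ μ ^ (n-1) / 1 := by
      apply div_le_div_of_nonneg_left (by positivity) (by norm_num) hmR
    rw [div_one] at h2
    linarith
  intro q
  induction q with
  | zero => simp
  | succ q ih =>
    have hmul : (n-1) * (q+1) = (n-1) * q + (n-1) := by ring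
    have hmod : ((n-1) * q) % (n-1) = 0 := Nat.mul_mod_right _ _
    calc wdS hn ε μ x0 ((n-1) * (q+1))
        = wdS hn ε μ x0 ((n-1) * q + (n-1)) := by rw [hmul]
      _ ≤ (1 - μ ^ (n-1) / ((n-1 : ℕ) : ℝ)) * wdS hn ε μ x0 ((n-1)*q) :=
          wdS_round hn ε μ x0 hμ0 hμ hCε hInv _ hmod
      _ ≤ (1 - μ ^ (n-1) / ((n-1 : ℕ) : ℝ)) *
            ((1 - μ ^ (n-1) / ((n-1 : ℕ) : ℝ)) ^ q * wdS hn ε μ x0 0) :=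
          mul_le_mul_of_nonneg_left ih hρ0
      _ = (1 - μ ^ (n-1) / ((n-1 : ℕ) : ℝ)) ^ (q+1) * wdS hn ε μ x0 0 := by ring

include hμ0 hμ hCε hInv in
lemma wdS_decay (t : ℕ) : wdS hn ε μ x0 t
    ≤ (1 - μ ^ (n-1) / ((n-1 : ℕ) : ℝ)) ^ (t / (n-1)) * wdS hn ε μ x0 0 := by
  exact le_trans
    (wdS_anti hn ε μ x0 hμ0 hCε hInv _ t (Nat.mul_div_le t (n-1)))
    (wdS_pow hn ε μ x0 hμ0 hμ hCε hInv (t / (n-1)))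
end WD5

/-- upper bound of Proposition 1: if `ε` exceeds
`max_i Σ_{j=0}^{i-1} μ^j Δx_{i-j}(0)`, the phone chain of closest drives the
process to consensus at the initial mean opinion. -/
theorem wd_phoneChain_consensus {n : ℕ} (hn : 2 ≤ n) (ε μ : ℝ)
    (hε : 0 < ε) (hμ0 : 0 < μ) (hμ : μ ≤ 1 / 2)
    (x0 : Fin n → ℝ) (hord : Monotone x0)
    (hbig : ∀ i : Fin (n - 1), chainBound μ x0 i < ε) :
    ∀ i : Fin n, Tendsto (fun t => wdTraj ε μ (phoneChain n hn) x0 t i) atTop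
      (nhds ((1 / (n : ℝ)) * ∑ j, x0 j)) := by
  have hne : (Finset.univ : Finset (Fin (n-1))).Nonempty :=
    ⟨⟨0, by omega⟩, Finset.mem_univ _⟩
  set C := Finset.univ.sup' hne (chainBound μ x0) with hCdef
  have hCle : ∀ i, chainBound μ x0 i ≤ C := fun i => Finset.le_sup' _ (Finset.mem_univ i)
  have hCε : C < ε := (Finset.sup'_lt_iff hne).2 fun i _ => hbig i
  have hC0 : 0 ≤ C := by
    refine le_trans ?_ (hCle ⟨0, by omega⟩)
    rw [chainBound]
    refine Finset.sum_nonneg fun j hj => mul_nonneg (by positivity) ?_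
    rw [gap]
    exact sub_nonneg.2 (hord (by rw [Fin.mk_le_mk]; omega))
  have hInv := wdInv_all hn ε μ x0 hμ0 hμ hC0 hCε hord hCle
  intro l
  set c : ℝ := (1/(n:ℝ)) * ∑ j, x0 j with hcdef
  have hnR : (0:ℝ) < (n:ℝ) := by
    have : 0 < n := by omega
    exact_mod_cast this
  have hbound : ∀ t, |wdTraj ε μ (phoneChain n hn) x0 t l - c| ≤ wdS hn ε μ x0 t := by
    intro t
    obtain ⟨hg, hsum, -⟩ := hInv t
    have hlow : ∀ j : Fin n,
        wdXn hn ε μ x0 t 0 ≤ wdTraj ε μ (phoneChain n hn) x0 t j := by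
      intro j
      rw [← wdXn_fin hn ε μ x0 t j]
      have h := wdG_telescope hn ε μ x0 t (j : ℕ)
      have h2 : 0 ≤ ∑ i ∈ Finset.range (j : ℕ), wdG hn ε μ x0 t i :=
        Finset.sum_nonneg fun i _ => hg i
      linarith
    have hhigh : ∀ j : Fin n,
        wdTraj ε μ (phoneChain n hn) x0 t j ≤ wdXn hn ε μ x0 t (n-1) := by
      intro j
      rw [← wdXn_fin hn ε μ x0 t j]
      have h1 := wdG_telescope hn ε μ x0 t (j : ℕ)
      have h2 := wdG_telescope hn ε μ x0 t (n-1)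
      have hsub : ∑ i ∈ Finset.range (j : ℕ), wdG hn ε μ x0 t i
          ≤ ∑ i ∈ Finset.range (n-1), wdG hn ε μ x0 t i :=
        Finset.sum_le_sum_of_subset_of_nonneg
          (Finset.range_subset_range.2 (by have := j.isLt; omega)) (fun i _ _ => hg i)
      linarith
    have hsum_low : (n:ℝ) * wdXn hn ε μ x0 t 0 ≤ ∑ j, x0 j := by
      rw [← hsum]
      calc (n:ℝ) * wdXn hn ε μ x0 t 0 = ∑ _j : Fin n, wdXn hn ε μ x0 t 0 := by
            rw [Finset.sum_const, Finset.card_univ, Fintype.card_fin, nsmul_eq_mul]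
        _ ≤ ∑ j, wdTraj ε μ (phoneChain n hn) x0 t j :=
            Finset.sum_le_sum fun j _ => hlow j
    have hsum_high : ∑ j, x0 j ≤ (n:ℝ) * wdXn hn ε μ x0 t (n-1) := by
      rw [← hsum]
      calc ∑ j, wdTraj ε μ (phoneChain n hn) x0 t j
          ≤ ∑ _j : Fin n, wdXn hn ε μ x0 t (n-1) :=
            Finset.sum_le_sum fun j _ => hhigh j
        _ = (n:ℝ) * wdXn hn ε μ x0 t (n-1) := by
            rw [Finset.sum_const, Finset.card_univ, Fintype.card_fin, nsmul_eq_mul]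
    have hcl : wdXn hn ε μ x0 t 0 ≤ c := by
      rw [hcdef, show wdXn hn ε μ x0 t 0
        = (1/(n:ℝ)) * ((n:ℝ) * wdXn hn ε μ x0 t 0) from by field_simp]
      exact mul_le_mul_of_nonneg_left hsum_low (by positivity)
    have hch : c ≤ wdXn hn ε μ x0 t (n-1) := by
      rw [hcdef, show wdXn hn ε μ x0 t (n-1)
        = (1/(n:ℝ)) * ((n:ℝ) * wdXn hn ε μ x0 t (n-1)) from by field_simp]
      exact mul_le_mul_of_nonneg_left hsum_high (by positivity)
    rw [wdS_def, abs_le]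
    constructor
    · linarith [hlow l]
    · linarith [hhigh l]
  -- the geometric decay
  have hm1 : 1 ≤ n - 1 := by omega
  have hmR : (1:ℝ) ≤ ((n-1 : ℕ) : ℝ) := by exact_mod_cast hm1
  have hρ0 : 0 ≤ 1 - μ ^ (n-1) / ((n-1 : ℕ) : ℝ) := by
    have h1 : μ ^ (n-1) ≤ 1 := pow_le_one₀ hμ0.le (by linarith)
    have h2 : μ ^ (n-1) / ((n-1:ℕ):ℝ) ≤ μ ^ (n-1) / 1 :=
      div_le_div_of_nonneg_left (by positivity) (by norm_num) hmR
    rw [div_one] at h2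
    linarith
  have hρ1 : 1 - μ ^ (n-1) / ((n-1 : ℕ) : ℝ) < 1 := by
    have : 0 < μ ^ (n-1) / ((n-1:ℕ):ℝ) := by positivity
    linarith
  have hdiv : Tendsto (fun t : ℕ => t / (n-1)) atTop atTop := by
    apply Filter.tendsto_atTop_atTop.2
    intro b
    exact ⟨b * (n-1), fun t ht => (Nat.le_div_iff_mul_le (by omega)).2 ht⟩
  have hgeo : Tendsto (fun q : ℕ => (1 - μ ^ (n-1) / ((n-1 : ℕ) : ℝ)) ^ q
      * wdS hn ε μ x0 0) atTop (nhds 0) := by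
    have := (tendsto_pow_atTop_nhds_zero_of_lt_one hρ0 hρ1).mul_const (wdS hn ε μ x0 0)
    simpa using this
  have hcomp : Tendsto (fun t : ℕ => (1 - μ ^ (n-1) / ((n-1 : ℕ) : ℝ)) ^ (t / (n-1))
      * wdS hn ε μ x0 0) atTop (nhds 0) := hgeo.comp hdiv
  have habs : Tendsto (fun t => |wdTraj ε μ (phoneChain n hn) x0 t l - c|) atTop (nhds 0) :=
    squeeze_zero (fun t => abs_nonneg _)
      (fun t => le_trans (hbound t) (wdS_decay hn ε μ x0 hμ0 hμ hCε hInv t)) hcomp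
  rw [show nhds c = nhds c from rfl]
  rw [tendsto_iff_dist_tendsto_zero]
  simpa [Real.dist_eq] using habs
end

section
/- (Corollary 1.) Let x(0) be an ordered initial profile with max Δx(0) > 0, let range(x(0)) := x_n(0) − x_1(0), and set m := ⌈range(x(0)) / max Δx(0)⌉. Then max_{i∈{1,…,n−1}} Σ_{j=0}^{i−1} μ^j · Δx_{i−j}(0) ≤ ((1 − μ^m)/(1 − μ)) · max Δx(0); consequently, if ε > ((1 − μ^m)/(1 − μ)) · max Δx(0), the phone chain of closest drives the process to consensus. -/
/-!
The bound on the chain sums is a rearrangement: against the decreasing weights `μ ^ j`, gaps that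
are each at most `max Δx(0)` and add up to the range weigh the most when the first `m` of them
equal `max Δx(0)`.

For consensus, follow one sweep `(1,2), …, (n-1,n)` of the phone chain from a profile `y`. The
opinion that agent `r` holds when it meets agent `r+1` is the running average
`z_r = μ z_{r-1} + (1 - μ) y_r`, so the gap met at that step is exactly the chain sum
`d_r = Σ_j μ^j Δy_{r-j}`; when all chain sums are below `ε`, every pair of the sweep interacts.
The gaps after the sweep are `(1 - 2μ) d_r + μ d_{r+1}`, which keeps every chain sum below its old
bound and shrinks the maximal gap by the factor `1 - μ^(n-1)`. Since opinions never leave an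
interval they share and the mean opinion is conserved, all opinions converge to the mean.
-/

open Filter

noncomputable def chainSum (μ : ℝ) (g : ℕ → ℝ) (k : ℕ) : ℝ :=
  ∑ j ∈ Finset.range (k + 1), μ ^ j * g (k - j)

section ChainSum

variable {μ : ℝ} {g : ℕ → ℝ}

lemma chainSum_zero : chainSum μ g 0 = g 0 := by
  simp [chainSum]

lemma chainSum_succ (k : ℕ) : chainSum μ g (k + 1) = g (k + 1) + μ * chainSum μ g k := by
  rw [chainSum, Finset.sum_range_succ', chainSum, Finset.mul_sum]
  simp only [pow_zero, one_mul, Nat.sub_zero, add_comm (g (k + 1))]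
  congr 1
  refine Finset.sum_congr rfl fun j hj => ?_
  rw [Finset.mem_range] at hj
  rw [show k + 1 - (j + 1) = k - j by omega, pow_succ]
  ring

lemma chainSum_succ' (k : ℕ) :
    chainSum μ g (k + 1) = chainSum μ (fun v => g (v + 1)) k + μ ^ (k + 1) * g 0 := by
  rw [chainSum, Finset.sum_range_succ, Nat.sub_self, chainSum]
  congr 1
  refine Finset.sum_congr rfl fun j hj => ?_
  rw [Finset.mem_range] at hj
  rw [show k + 1 - j = k - j + 1 by omega]

lemma chainSum_nonneg (hμ : 0 ≤ μ) (hg : ∀ v, 0 ≤ g v) (k : ℕ) : 0 ≤ chainSum μ g k :=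
  Finset.sum_nonneg fun j _ => mul_nonneg (pow_nonneg hμ j) (hg _)

lemma chainSum_le_geom_sum_mul (hμ : 0 ≤ μ) {M : ℝ} (hg : ∀ v, g v ≤ M) (k : ℕ) :
    chainSum μ g k ≤ (∑ j ∈ Finset.range (k + 1), μ ^ j) * M := by
  rw [Finset.sum_mul]
  exact Finset.sum_le_sum fun j _ => mul_le_mul_of_nonneg_left (hg _) (pow_nonneg hμ j)

lemma one_sub_mul_chainSum_le (hμ0 : 0 ≤ μ) (hμ1 : μ ≤ 1) {C : ℝ} (hg0 : ∀ v, 0 ≤ g v)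
    (hgC : ∀ v, g v ≤ C) (k : ℕ) : (1 - μ) * chainSum μ g k ≤ C := by
  induction k with
  | zero => rw [chainSum_zero]; nlinarith [hg0 0, hgC 0]
  | succ k ih =>
    rw [chainSum_succ]
    nlinarith [hg0 (k + 1), hgC (k + 1)]

lemma chainSum_smooth_le (hμ0 : 0 ≤ μ) (hμ : μ ≤ 1 / 2) {C : ℝ} (hg0 : ∀ v, 0 ≤ g v)
    (hgC : ∀ v, g v ≤ C) (k : ℕ) :
    chainSum μ (fun v => (1 - 2 * μ) * g v + μ * g (v + 1)) k ≤ C := by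
  have hsplit : chainSum μ (fun v => (1 - 2 * μ) * g v + μ * g (v + 1)) k
      = (1 - 2 * μ) * chainSum μ g k + μ * chainSum μ (fun v => g (v + 1)) k := by
    simp only [chainSum, Finset.mul_sum, ← Finset.sum_add_distrib]
    exact Finset.sum_congr rfl fun j _ => by ring
  have hshift : chainSum μ (fun v => g (v + 1)) k ≤ g (k + 1) + μ * chainSum μ g k := by
    rw [← chainSum_succ, chainSum_succ']
    have := mul_nonneg (pow_nonneg hμ0 (k + 1)) (hg0 0)
    linarith
  have hS := one_sub_mul_chainSum_le hμ0 (by linarith) hg0 hgC k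
  have hS0 := chainSum_nonneg hμ0 hg0 k
  rw [hsplit]
  nlinarith [hgC (k + 1)]

end ChainSum

lemma sum_pow_mul_le_geom_sum_mul {μ G : ℝ} (hμ0 : 0 ≤ μ) (hμ1 : μ ≤ 1) {g : ℕ → ℝ} {s m : ℕ}
    (hg0 : ∀ j, 0 ≤ g j) (hgG : ∀ j, g j ≤ G)
    (hsum : ∑ j ∈ Finset.range s, g j ≤ m * G) :
    ∑ j ∈ Finset.range s, μ ^ j * g j ≤ (∑ j ∈ Finset.range m, μ ^ j) * G := by
  have hG : 0 ≤ G := (hg0 0).trans (hgG 0)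
  have hpow : ∀ {a b : ℕ}, a ≤ b → μ ^ b ≤ μ ^ a := fun hab => pow_le_pow_of_le_one hμ0 hμ1 hab
  have hexcess : ∑ j ∈ Finset.range s, (μ ^ j - μ ^ m) * g j
      ≤ ∑ j ∈ Finset.range m, (μ ^ j - μ ^ m) * G := by
    calc ∑ j ∈ Finset.range s, (μ ^ j - μ ^ m) * g j
        ≤ ∑ j ∈ Finset.range s, if j < m then (μ ^ j - μ ^ m) * G else 0 := by
          refine Finset.sum_le_sum fun j _ => ?_
          split_ifs with hj
          · exact mul_le_mul_of_nonneg_left (hgG j) (sub_nonneg.2 (hpow hj.le))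
          · exact mul_nonpos_of_nonpos_of_nonneg (sub_nonpos.2 (hpow (not_lt.1 hj))) (hg0 j)
      _ = ∑ j ∈ Finset.range (min s m), (μ ^ j - μ ^ m) * G := by
          rw [← Finset.sum_filter]
          congr 1
          ext j
          simp
      _ ≤ ∑ j ∈ Finset.range m, (μ ^ j - μ ^ m) * G :=
          Finset.sum_le_sum_of_subset_of_nonneg (Finset.range_subset_range.2 (min_le_right s m))
            fun j hj _ => mul_nonneg (sub_nonneg.2 (hpow (Finset.mem_range.1 hj).le)) hG
  have hleft : ∑ j ∈ Finset.range s, (μ ^ j - μ ^ m) * g j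
      = ∑ j ∈ Finset.range s, μ ^ j * g j - μ ^ m * ∑ j ∈ Finset.range s, g j := by
    rw [Finset.mul_sum, ← Finset.sum_sub_distrib]
    exact Finset.sum_congr rfl fun j _ => by ring
  have hright : ∑ j ∈ Finset.range m, (μ ^ j - μ ^ m) * G
      = (∑ j ∈ Finset.range m, μ ^ j) * G - μ ^ m * (m * G) := by
    rw [← Finset.sum_mul, Finset.sum_sub_distrib, Finset.sum_const, Finset.card_range,
      nsmul_eq_mul]
    ring
  rw [hleft, hright] at hexcess
  nlinarith [mul_le_mul_of_nonneg_left hsum (pow_nonneg hμ0 m)]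

section Profile

variable {n : ℕ}

noncomputable def padZero (y : Fin n → ℝ) (v : ℕ) : ℝ :=
  if h : v < n then y ⟨v, h⟩ else 0

noncomputable def gapSeq (y : Fin n → ℝ) (v : ℕ) : ℝ :=
  if h : v < n - 1 then gap y ⟨v, h⟩ else 0

noncomputable def chainBoundSeq (μ : ℝ) (y : Fin n → ℝ) (v : ℕ) : ℝ :=
  if h : v < n - 1 then chainBound μ y ⟨v, h⟩ else 0

lemma padZero_of_lt (y : Fin n → ℝ) {v : ℕ} (h : v < n) : padZero y v = y ⟨v, h⟩ :=
  dif_pos h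

lemma gapSeq_of_lt (y : Fin n → ℝ) {v : ℕ} (h : v + 1 < n) :
    gapSeq y v = padZero y (v + 1) - padZero y v := by
  rw [gapSeq, dif_pos (by omega), padZero_of_lt y h, padZero_of_lt y (by omega), gap]

lemma gapSeq_nonneg_of_monotone {y : Fin n → ℝ} (hy : Monotone y) (v : ℕ) : 0 ≤ gapSeq y v := by
  unfold gapSeq
  split_ifs
  · exact sub_nonneg.2 (hy (Fin.mk_le_mk.2 (Nat.le_succ v)))
  · exact le_rfl

lemma monotone_of_gapSeq_nonneg {y : Fin n → ℝ} (h : ∀ v, 0 ≤ gapSeq y v) : Monotone y := by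
  cases n with
  | zero => exact fun a => a.elim0
  | succ m =>
    refine Fin.monotone_iff_le_succ.2 fun i => ?_
    have hi := h i
    rw [gapSeq, dif_pos (by omega)] at hi
    exact sub_nonneg.1 hi

lemma gapSeq_le_maxGap (y : Fin n → ℝ) (h : 0 ≤ maxGap y) (v : ℕ) : gapSeq y v ≤ maxGap y := by
  unfold gapSeq
  split_ifs
  · exact le_ciSup (Set.finite_range _).bddAbove _
  · exact h

lemma sum_gapSeq (y : Fin n → ℝ) (hn : 0 < n) :
    ∑ v ∈ Finset.range (n - 1), gapSeq y v = y ⟨n - 1, by omega⟩ - y ⟨0, hn⟩ := by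
  rw [Finset.sum_congr rfl fun v hv => gapSeq_of_lt y (by simp at hv; omega),
    Finset.sum_range_sub, padZero_of_lt y (by omega), padZero_of_lt y hn]

lemma chainBound_eq_chainSum (μ : ℝ) (y : Fin n → ℝ) (i : Fin (n - 1)) :
    chainBound μ y i = chainSum μ (gapSeq y) i :=
  Finset.sum_congr rfl fun j _ => by rw [gapSeq, dif_pos (by omega)]

lemma chainBoundSeq_of_lt (μ : ℝ) (y : Fin n → ℝ) {v : ℕ} (h : v < n - 1) :
    chainBoundSeq μ y v = chainSum μ (gapSeq y) v := by
  rw [chainBoundSeq, dif_pos h, chainBound_eq_chainSum]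

end Profile

lemma chainBound_le_geom_sum_mul {n : ℕ} {μ G : ℝ} (hμ0 : 0 ≤ μ) (hμ1 : μ ≤ 1)
    {x0 : Fin n → ℝ} (hx0 : Monotone x0) (hG : ∀ v, gapSeq x0 v ≤ G) {m : ℕ}
    (hm : ∑ v ∈ Finset.range (n - 1), gapSeq x0 v ≤ m * G) (i : Fin (n - 1)) :
    chainBound μ x0 i ≤ (∑ j ∈ Finset.range m, μ ^ j) * G := by
  have hg := gapSeq_nonneg_of_monotone hx0
  rw [chainBound_eq_chainSum]
  refine sum_pow_mul_le_geom_sum_mul hμ0 hμ1 (fun _ => hg _) (fun _ => hG _) ?_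
  calc ∑ j ∈ Finset.range (i + 1), gapSeq x0 (i - j)
      = ∑ j ∈ Finset.range (i + 1), gapSeq x0 j := by
        simpa using Finset.sum_range_reflect (gapSeq x0) (i + 1)
    _ ≤ ∑ v ∈ Finset.range (n - 1), gapSeq x0 v :=
        Finset.sum_le_sum_of_subset_of_nonneg (Finset.range_subset_range.2 i.isLt)
          fun j _ _ => hg j
    _ ≤ m * G := hm

section Dynamics

variable {n : ℕ} {ε μ : ℝ}

lemma wdStep_apply_of_lt {i j : Fin n} {x : Fin n → ℝ} (h : |x i - x j| < ε) (l : Fin n) :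
    wdStep ε μ i j x l =
      if l = j then μ * x i + (1 - μ) * x j
      else if l = i then (1 - μ) * x i + μ * x j else x l := by
  simp only [wdStep, if_pos h, Function.update_apply]

lemma wdStep_mem {S : Set ℝ} (hS : Convex ℝ S) (hμ0 : 0 ≤ μ) (hμ1 : μ ≤ 1) (i j : Fin n)
    {x : Fin n → ℝ} (hx : ∀ l, x l ∈ S) (l : Fin n) : wdStep ε μ i j x l ∈ S := by
  by_cases h : |x i - x j| < ε
  · rw [wdStep_apply_of_lt h]
    split_ifs
    · exact hS (hx i) (hx j) hμ0 (by linarith) (by ring)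
    · exact hS (hx i) (hx j) (by linarith) hμ0 (by ring)
    · exact hx l
  · rw [wdStep, if_neg h]
    exact hx l

lemma sum_wdStep {i j : Fin n} (hij : i ≠ j) (x : Fin n → ℝ) :
    ∑ l, wdStep ε μ i j x l = ∑ l, x l := by
  unfold wdStep
  split_ifs
  · rw [Finset.sum_update_of_mem (Finset.mem_univ j),
      Finset.sum_update_of_mem (by simp [hij] : i ∈ Finset.univ \ {j}),
      ← Finset.add_sum_erase _ _ (Finset.mem_univ j),
      ← Finset.add_sum_erase _ _ (by simp [hij] : i ∈ Finset.univ.erase j)]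
    simp only [Finset.sdiff_singleton_eq_erase]
    ring
  · rfl

lemma wdTraj_add (regime : ℕ → Fin n × Fin n) (x0 : Fin n → ℝ) (s t : ℕ) :
    wdTraj ε μ regime x0 (s + t) =
      wdTraj ε μ (fun u => regime (s + u)) (wdTraj ε μ regime x0 s) t := by
  induction t with
  | zero => rfl
  | succ t ih => rw [← add_assoc, wdTraj, ih, wdTraj]

lemma wdTraj_mem {S : Set ℝ} (hS : Convex ℝ S) (hμ0 : 0 ≤ μ) (hμ1 : μ ≤ 1)
    (regime : ℕ → Fin n × Fin n) {x0 : Fin n → ℝ} (hx0 : ∀ l, x0 l ∈ S) (t : ℕ) (l : Fin n) :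
    wdTraj ε μ regime x0 t l ∈ S := by
  induction t generalizing l with
  | zero => exact hx0 l
  | succ t ih => exact wdStep_mem hS hμ0 hμ1 _ _ ih l

lemma sum_wdTraj {regime : ℕ → Fin n × Fin n} (hregime : ∀ t, (regime t).1 ≠ (regime t).2)
    (x0 : Fin n → ℝ) (t : ℕ) : ∑ l, wdTraj ε μ regime x0 t l = ∑ l, x0 l := by
  induction t with
  | zero => rfl
  | succ t ih => rw [wdTraj, sum_wdStep (hregime t), ih]

lemma abs_wdTraj_sub_mean_le (hμ0 : 0 ≤ μ) (hμ1 : μ ≤ 1) {regime : ℕ → Fin n × Fin n}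
    (hregime : ∀ t, (regime t).1 ≠ (regime t).2) (x0 : Fin n → ℝ) {s t : ℕ} (hst : s ≤ t)
    {a b : ℝ} (hs : ∀ l, wdTraj ε μ regime x0 s l ∈ Set.Icc a b) (i : Fin n) :
    |wdTraj ε μ regime x0 t i - (∑ l, x0 l) / n| ≤ b - a := by
  obtain ⟨u, rfl⟩ := Nat.exists_eq_add_of_le hst
  have hmem : ∀ l, wdTraj ε μ regime x0 (s + u) l ∈ Set.Icc a b := by
    rw [wdTraj_add]
    exact wdTraj_mem (convex_Icc a b) hμ0 hμ1 _ hs u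
  have hn : (0 : ℝ) < n := by exact_mod_cast i.pos
  have hmean : (∑ l, x0 l) / n ∈ Set.Icc a b := by
    rw [← sum_wdTraj hregime x0 (s + u), Finset.sum_div]
    simpa [div_eq_inv_mul] using (convex_Icc a b).sum_mem (t := Finset.univ)
      (w := fun _ => (n : ℝ)⁻¹) (fun _ _ => by positivity) (by simp [hn.ne'])
      (fun l _ => hmem l)
  exact Real.dist_le_of_mem_Icc (hmem i) hmean

end Dynamics

section PhoneChain

variable {n : ℕ} {ε μ : ℝ}

noncomputable def chainLead (μ : ℝ) (Y : ℕ → ℝ) : ℕ → ℝ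
  | 0 => Y 0
  | r + 1 => μ * chainLead μ Y r + (1 - μ) * Y (r + 1)

/-- The profile after the first `r` steps of a sweep of the phone chain started at `y`: agents
`l < r` are done, agent `r` holds the running average `chainLead`, the others are untouched. -/
noncomputable def sweepState (μ : ℝ) (y : Fin n → ℝ) (r : ℕ) (l : Fin n) : ℝ :=
  if (l : ℕ) < r then (1 - μ) * chainLead μ (padZero y) l + μ * padZero y (l + 1)
  else if (l : ℕ) = r then chainLead μ (padZero y) r else y l

lemma padZero_sub_chainLead (y : Fin n → ℝ) {r : ℕ} (hr : r < n - 1) :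
    padZero y (r + 1) - chainLead μ (padZero y) r = chainSum μ (gapSeq y) r := by
  induction r with
  | zero => rw [chainLead, chainSum_zero, gapSeq_of_lt y (by omega)]
  | succ r ih =>
    rw [chainLead, chainSum_succ, gapSeq_of_lt y (by omega), ← ih (by omega)]
    ring

lemma sweepState_zero (y : Fin n → ℝ) : sweepState μ y 0 = y := by
  funext l
  by_cases hl : (l : ℕ) = 0
  · rw [sweepState, if_neg (by omega), if_pos hl, chainLead, padZero_of_lt y l.pos]
    exact congrArg y (Fin.ext hl.symm)
  · rw [sweepState, if_neg (by omega), if_neg hl]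

lemma wdStep_sweepState (y : Fin n → ℝ) {r : ℕ} {i j : Fin n} (hi : (i : ℕ) = r)
    (hj : (j : ℕ) = r + 1) (h : |sweepState μ y r i - sweepState μ y r j| < ε) :
    wdStep ε μ i j (sweepState μ y r) = sweepState μ y (r + 1) := by
  have hyi : sweepState μ y r i = chainLead μ (padZero y) r := by
    rw [sweepState, if_neg (by omega), if_pos hi]
  have hyj : sweepState μ y r j = padZero y (r + 1) := by
    rw [sweepState, if_neg (by omega), if_neg (by omega), padZero_of_lt y (by omega)]
    exact congrArg y (Fin.ext hj)
  funext l
  rw [wdStep_apply_of_lt h, hyi, hyj]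
  simp only [sweepState, Fin.ext_iff, hi, hj]
  split_ifs <;> first
    | omega
    | rfl
    | rw [show (l : ℕ) = r by omega]

lemma phoneChain_val_of_lt (hn : 2 ≤ n) {r : ℕ} (hr : r < n - 1) :
    ((phoneChain n hn r).1 : ℕ) = r ∧ ((phoneChain n hn r).2 : ℕ) = r + 1 := by
  simp [phoneChain, Nat.mod_eq_of_lt hr]

lemma phoneChain_mul_add (hn : 2 ≤ n) (k u : ℕ) :
    phoneChain n hn (k * (n - 1) + u) = phoneChain n hn u := by
  simp [phoneChain, Nat.mul_add_mod_self_right]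

lemma phoneChain_ne (hn : 2 ≤ n) (t : ℕ) : (phoneChain n hn t).1 ≠ (phoneChain n hn t).2 := by
  simp [phoneChain, Fin.ext_iff]

lemma wdTraj_phoneChain_eq_sweepState (hn : 2 ≤ n) (hμ0 : 0 ≤ μ) {y : Fin n → ℝ}
    (hy : ∀ v, 0 ≤ gapSeq y v) (hyε : ∀ i, chainBound μ y i < ε) {r : ℕ} (hr : r ≤ n - 1) :
    wdTraj ε μ (phoneChain n hn) y r = sweepState μ y r := by
  induction r with
  | zero => exact (sweepState_zero y).symm
  | succ r ih =>
    obtain ⟨hi, hj⟩ := phoneChain_val_of_lt hn (show r < n - 1 by omega)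
    rw [wdTraj, ih (by omega)]
    refine wdStep_sweepState y hi hj ?_
    have hd := padZero_sub_chainLead (μ := μ) y (show r < n - 1 by omega)
    rw [sweepState, if_neg (by omega), if_pos hi, sweepState, if_neg (by omega),
      if_neg (by omega), ← padZero_of_lt y (by omega), hj, abs_sub_comm, hd,
      abs_of_nonneg (chainSum_nonneg hμ0 hy r), ← chainBound_eq_chainSum μ y ⟨r, by omega⟩]
    exact hyε _

lemma gapSeq_sweepState (y : Fin n → ℝ) (v : ℕ) :
    gapSeq (sweepState μ y (n - 1)) v =
      (1 - 2 * μ) * chainBoundSeq μ y v + μ * chainBoundSeq μ y (v + 1) := by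
  have hd : ∀ {w}, w < n - 1 →
      chainBoundSeq μ y w = padZero y (w + 1) - chainLead μ (padZero y) w := fun hw => by
    rw [chainBoundSeq_of_lt μ y hw, padZero_sub_chainLead y hw]
  rcases lt_trichotomy (v + 1) (n - 1) with hv | hv | hv
  · rw [gapSeq_of_lt _ (by omega), padZero_of_lt _ (by omega), padZero_of_lt _ (by omega),
      hd (by omega), hd hv]
    simp only [sweepState, hv, show v < n - 1 by omega, if_true, chainLead]
    ring
  · rw [gapSeq_of_lt _ (by omega), padZero_of_lt _ (by omega), padZero_of_lt _ (by omega),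
      hd (by omega), chainBoundSeq, dif_neg (by omega)]
    simp only [sweepState, ← hv, lt_self_iff_false, Nat.lt_succ_self, if_true, if_false,
      chainLead]
    ring
  · rw [gapSeq, dif_neg (by omega), chainBoundSeq, dif_neg (by omega), chainBoundSeq,
      dif_neg (by omega)]
    ring

end PhoneChain

section Sweeps

variable {n : ℕ} {ε μ : ℝ}

lemma chainBoundSeq_nonneg (hμ0 : 0 ≤ μ) {y : Fin n → ℝ} (hy : ∀ v, 0 ≤ gapSeq y v) (v : ℕ) :
    0 ≤ chainBoundSeq μ y v := by
  unfold chainBoundSeq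
  split_ifs
  · rw [chainBound_eq_chainSum]
    exact chainSum_nonneg hμ0 hy _
  · exact le_rfl

lemma gapSeq_sweepState_nonneg (hμ0 : 0 ≤ μ) (hμ : μ ≤ 1 / 2) {y : Fin n → ℝ}
    (hy : ∀ v, 0 ≤ gapSeq y v) (v : ℕ) : 0 ≤ gapSeq (sweepState μ y (n - 1)) v := by
  rw [gapSeq_sweepState]
  have := chainBoundSeq_nonneg hμ0 hy v
  have := chainBoundSeq_nonneg hμ0 hy (v + 1)
  have : 0 ≤ 1 - 2 * μ := by linarith
  positivity

lemma chainBoundSeq_sweepState_le (hμ0 : 0 ≤ μ) (hμ : μ ≤ 1 / 2) {C : ℝ} (hC : 0 ≤ C)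
    {y : Fin n → ℝ} (hy : ∀ v, 0 ≤ gapSeq y v) (hyC : ∀ v, chainBoundSeq μ y v ≤ C) (v : ℕ) :
    chainBoundSeq μ (sweepState μ y (n - 1)) v ≤ C := by
  unfold chainBoundSeq
  split_ifs
  · rw [chainBound_eq_chainSum, funext (gapSeq_sweepState y)]
    exact chainSum_smooth_le hμ0 hμ (chainBoundSeq_nonneg hμ0 hy) hyC _
  · exact hC

lemma gapSeq_sweepState_le (hμ0 : 0 ≤ μ) (hμ : μ ≤ 1 / 2) {M : ℝ} {y : Fin n → ℝ}
    (hy : ∀ v, 0 ≤ gapSeq y v) (hyM : ∀ v, gapSeq y v ≤ M) (v : ℕ) :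
    gapSeq (sweepState μ y (n - 1)) v ≤ (1 - μ ^ (n - 1)) * M := by
  have hM : 0 ≤ M := (hy 0).trans (hyM 0)
  set G := (∑ j ∈ Finset.range (n - 1), μ ^ j) * M
  have hG : ∀ w, chainBoundSeq μ y w ≤ G := fun w => by
    unfold chainBoundSeq
    split_ifs with hw
    · rw [chainBound_eq_chainSum]
      refine (chainSum_le_geom_sum_mul hμ0 hyM w).trans (mul_le_mul_of_nonneg_right ?_ hM)
      exact Finset.sum_le_sum_of_subset_of_nonneg (Finset.range_subset_range.2 hw)
        fun j _ _ => pow_nonneg hμ0 j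
    · exact mul_nonneg (Finset.sum_nonneg fun j _ => pow_nonneg hμ0 j) hM
  have hGM : (1 - μ) * G = (1 - μ ^ (n - 1)) * M := by
    rw [← geom_sum_mul_neg]
    ring
  rw [gapSeq_sweepState, ← hGM]
  nlinarith [hG v, hG (v + 1)]

lemma wdTraj_phoneChain_succ_mul (hn : 2 ≤ n) (x0 : Fin n → ℝ) (k : ℕ) :
    wdTraj ε μ (phoneChain n hn) x0 ((k + 1) * (n - 1)) =
      wdTraj ε μ (phoneChain n hn) (wdTraj ε μ (phoneChain n hn) x0 (k * (n - 1))) (n - 1) := by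
  rw [add_one_mul, wdTraj_add]
  simp only [phoneChain_mul_add]

lemma phoneChain_sweep_invariant (hn : 2 ≤ n) (hμ0 : 0 ≤ μ) (hμ : μ ≤ 1 / 2) {C M : ℝ}
    (hCε : C < ε) (hC : 0 ≤ C) {x0 : Fin n → ℝ} (hx0 : ∀ v, 0 ≤ gapSeq x0 v)
    (hx0C : ∀ v, chainBoundSeq μ x0 v ≤ C) (hx0M : ∀ v, gapSeq x0 v ≤ M) (k : ℕ) :
    (∀ v, 0 ≤ gapSeq (wdTraj ε μ (phoneChain n hn) x0 (k * (n - 1))) v) ∧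
    (∀ v, chainBoundSeq μ (wdTraj ε μ (phoneChain n hn) x0 (k * (n - 1))) v ≤ C) ∧
    (∀ v, gapSeq (wdTraj ε μ (phoneChain n hn) x0 (k * (n - 1))) v
      ≤ (1 - μ ^ (n - 1)) ^ k * M) := by
  induction k with
  | zero => simpa [wdTraj] using ⟨hx0, hx0C, hx0M⟩
  | succ k ih =>
    obtain ⟨hy, hyC, hyM⟩ := ih
    have hyε : ∀ i, chainBound μ (wdTraj ε μ (phoneChain n hn) x0 (k * (n - 1))) i < ε :=
      fun i => by simpa [chainBoundSeq] using (hyC i).trans_lt hCε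
    rw [wdTraj_phoneChain_succ_mul, wdTraj_phoneChain_eq_sweepState hn hμ0 hy hyε le_rfl,
      pow_succ', mul_assoc]
    exact ⟨gapSeq_sweepState_nonneg hμ0 hμ hy, chainBoundSeq_sweepState_le hμ0 hμ hC hy hyC,
      gapSeq_sweepState_le hμ0 hμ hy hyM⟩

end Sweeps

lemma tendsto_wdTraj_phoneChain_mean {n : ℕ} (hn : 2 ≤ n) {ε μ C M : ℝ} (hμ0 : 0 < μ)
    (hμ : μ ≤ 1 / 2) (hCε : C < ε) {x0 : Fin n → ℝ} (hx0 : Monotone x0)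
    (hx0C : ∀ i, chainBound μ x0 i ≤ C) (hx0M : ∀ v, gapSeq x0 v ≤ M) (i : Fin n) :
    Tendsto (fun t => wdTraj ε μ (phoneChain n hn) x0 t i) atTop (nhds ((∑ l, x0 l) / n)) := by
  have hg := gapSeq_nonneg_of_monotone hx0
  have hC : 0 ≤ C := (chainBoundSeq_nonneg hμ0.le hg 0).trans <| by
    simpa [chainBoundSeq, show 0 < n - 1 by omega] using hx0C ⟨0, by omega⟩
  have hCseq : ∀ v, chainBoundSeq μ x0 v ≤ C := fun v => by
    unfold chainBoundSeq
    split_ifs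
    exacts [hx0C _, hC]
  set q := 1 - μ ^ (n - 1)
  have hq0 : 0 ≤ q := sub_nonneg.2 (pow_le_one₀ hμ0.le (by linarith))
  have hq1 : q < 1 := sub_lt_self 1 (pow_pos hμ0 _)
  have hrate : ∀ t, |wdTraj ε μ (phoneChain n hn) x0 t i - (∑ l, x0 l) / n|
      ≤ (n - 1 : ℕ) * (q ^ (t / (n - 1)) * M) := fun t => by
    obtain ⟨hy, -, hyM⟩ :=
      phoneChain_sweep_invariant hn hμ0.le hμ hCε hC hg hCseq hx0M (t / (n - 1))
    set y := wdTraj ε μ (phoneChain n hn) x0 (t / (n - 1) * (n - 1))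
    have hspread := abs_wdTraj_sub_mean_le (ε := ε) hμ0.le (by linarith) (phoneChain_ne hn) x0
      (Nat.div_mul_le_self t (n - 1)) (a := y ⟨0, by omega⟩) (b := y ⟨n - 1, by omega⟩)
      (fun l => ⟨monotone_of_gapSeq_nonneg hy (Fin.mk_le_of_le_val (Nat.zero_le _)),
        monotone_of_gapSeq_nonneg hy (Fin.le_iff_val_le_val.2 (by simp; omega))⟩) i
    refine hspread.trans ?_
    rw [← sum_gapSeq y (by omega)]
    simpa using Finset.sum_le_sum fun v (_ : v ∈ Finset.range (n - 1)) => hyM v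
  have hlim :
      Tendsto (fun t : ℕ => ((n - 1 : ℕ) : ℝ) * (q ^ (t / (n - 1)) * M)) atTop (nhds 0) := by
    simpa using (((tendsto_pow_atTop_nhds_zero_of_lt_one hq0 hq1).comp
      (Nat.tendsto_div_const_atTop (by omega))).mul_const M).const_mul ((n - 1 : ℕ) : ℝ)
  rw [tendsto_iff_dist_tendsto_zero]
  exact squeeze_zero (fun _ => dist_nonneg) (fun t => (Real.dist_eq _ _).trans_le (hrate t)) hlim

/-- Corollary 1: with `m := ⌈range(x(0)) / max Δx(0)⌉`, the phone-chain
bound is at most `((1 - μ^m)/(1 - μ)) · max Δx(0)`; consequently, if `ε` exceeds this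
quantity, the phone chain of closest drives the process to consensus. -/
theorem wd_phoneChain_corollary {n : ℕ} (hn : 2 ≤ n) (ε μ : ℝ)
    (hμ0 : 0 < μ) (hμ : μ ≤ 1 / 2)
    (x0 : Fin n → ℝ) (hord : Monotone x0) (hpos : 0 < maxGap x0) :
    (⨆ i : Fin (n - 1), chainBound μ x0 i)
        ≤ ((1 - μ ^ ⌈(x0 ⟨n - 1, by omega⟩ - x0 ⟨0, by omega⟩) / maxGap x0⌉₊) / (1 - μ))
            * maxGap x0 ∧
    (((1 - μ ^ ⌈(x0 ⟨n - 1, by omega⟩ - x0 ⟨0, by omega⟩) / maxGap x0⌉₊) / (1 - μ))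
            * maxGap x0 < ε →
      ∃ c : ℝ, ∀ i : Fin n,
        Tendsto (fun t => wdTraj ε μ (phoneChain n hn) x0 t i) atTop (nhds c)) := by
  have hgap := gapSeq_le_maxGap x0 hpos.le
  have hrange : ∑ v ∈ Finset.range (n - 1), gapSeq x0 v
      ≤ ⌈(x0 ⟨n - 1, by omega⟩ - x0 ⟨0, by omega⟩) / maxGap x0⌉₊ * maxGap x0 := by
    rw [sum_gapSeq x0 (by omega), ← div_le_iff₀ hpos]
    exact Nat.le_ceil _
  have hbound : ∀ i, chainBound μ x0 i
      ≤ ((1 - μ ^ ⌈(x0 ⟨n - 1, by omega⟩ - x0 ⟨0, by omega⟩) / maxGap x0⌉₊) / (1 - μ))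
          * maxGap x0 := fun i => by
    rw [← eq_div_of_mul_eq (by linarith) (geom_sum_mul_neg μ _)]
    exact chainBound_le_geom_sum_mul hμ0.le (by linarith) hord hgap hrange i
  have : Nonempty (Fin (n - 1)) := ⟨⟨0, by omega⟩⟩
  exact ⟨ciSup_le hbound, fun hε =>
    ⟨_, tendsto_wdTraj_phoneChain_mean hn hμ0 hμ hε hord hbound hgap⟩⟩
end

section
/- For μ = 1/2, enforcing consensus is always possible when ε is at least twice the maximal gap of the initial profile: if x(0) is ordered with max Δx(0) > 0 and ε ≥ 2 · max Δx(0), then the phone chain of closest drives the process to consensus. -/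
open Filter

lemma gap_le_maxGap {n : ℕ} (x : Fin n → ℝ) (i : Fin (n-1)) : gap x i ≤ maxGap x :=
  le_ciSup (Set.Finite.bddAbove (Set.finite_range _)) i

lemma wdStep_avg {n : ℕ} (ε : ℝ) (i j : Fin n) (x : Fin n → ℝ) (hij : i ≠ j)
    (h : |x i - x j| < ε) :
    wdStep ε (1/2) i j x = fun k => if k = i ∨ k = j then (x i + x j)/2 else x k := by
  funext k
  simp only [wdStep, if_pos h]
  rcases eq_or_ne k j with rfl|hj
  · rw [Function.update_self, if_pos (Or.inr rfl)]; ring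
  · rcases eq_or_ne k i with rfl|hi
    · rw [Function.update_of_ne hj, Function.update_self, if_pos (Or.inl rfl)]; ring
    · rw [Function.update_of_ne hj, Function.update_of_ne hi, if_neg (by tauto)]

noncomputable def traj {n : ℕ} (hn : 2 ≤ n) (ε : ℝ) (x0 : Fin n → ℝ) (t : ℕ) : Fin n → ℝ :=
  wdTraj ε (1/2) (phoneChain n hn) x0 t

lemma step_coords {n : ℕ} (hn : 2 ≤ n) (ε : ℝ) (x0 : Fin n → ℝ) (t : ℕ)
    (hmono : Monotone (traj hn ε x0 t))
    (hlt : gap (traj hn ε x0 t)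
      ⟨t % (n-1), Nat.mod_lt t (by omega)⟩ < ε) :
    ∀ k : Fin n, traj hn ε x0 (t+1) k =
      if (k:ℕ) = t % (n-1) ∨ (k:ℕ) = t % (n-1) + 1 then
        (traj hn ε x0 t ⟨t % (n-1), by have := Nat.mod_lt t (show 0 < n-1 by omega); omega⟩
         + traj hn ε x0 t ⟨t % (n-1) + 1, by have := Nat.mod_lt t (show 0 < n-1 by omega); omega⟩)/2
      else traj hn ε x0 t k := by
  intro k
  have hr : t % (n-1) < n - 1 := Nat.mod_lt t (by omega)
  have hstep : traj hn ε x0 (t+1) =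
      wdStep ε (1/2) (phoneChain n hn t).1 (phoneChain n hn t).2 (traj hn ε x0 t) := rfl
  set x := traj hn ε x0 t with hx
  have hij : (phoneChain n hn t).1 ≠ (phoneChain n hn t).2 := by
    simp [phoneChain, Fin.ext_iff]
  have hgap : x (phoneChain n hn t).2 - x (phoneChain n hn t).1 =
      gap x ⟨t % (n-1), hr⟩ := rfl
  have hnonneg : 0 ≤ x (phoneChain n hn t).2 - x (phoneChain n hn t).1 := by
    have : (phoneChain n hn t).1 ≤ (phoneChain n hn t).2 := by
      simp [phoneChain, Fin.mk_le_mk]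
    linarith [hmono this]
  have habs : |x (phoneChain n hn t).1 - x (phoneChain n hn t).2| < ε := by
    rw [abs_sub_comm, abs_of_nonneg hnonneg, hgap]; exact hlt
  rw [hstep, wdStep_avg ε _ _ x hij habs]
  simp only [phoneChain, Fin.ext_iff]

lemma fin_app_congr {n : ℕ} (f : Fin n → ℝ) {a b : ℕ} (p : a < n) (q : b < n) (h : a = b) :
    f ⟨a, p⟩ = f ⟨b, q⟩ := by subst h; rfl

lemma gap_congr {n : ℕ} (x : Fin n → ℝ) {a b : ℕ} (p : a < n - 1) (q : b < n - 1)
    (h : a = b) : gap x ⟨a, p⟩ = gap x ⟨b, q⟩ := by subst h; rfl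

lemma wd_inv {n : ℕ} (hn : 2 ≤ n) (ε : ℝ) (x0 : Fin n → ℝ) (hord : Monotone x0)
    (hpos : 0 < maxGap x0) (h2 : 2 * maxGap x0 ≤ ε) : ∀ t : ℕ,
    Monotone (traj hn ε x0 t) ∧
    (∀ i : Fin (n-1), (i:ℕ) ≠ t % (n-1) → gap (traj hn ε x0 t) i ≤ maxGap x0) ∧
    gap (traj hn ε x0 t) ⟨t % (n-1), Nat.mod_lt t (by omega)⟩ < 2 * maxGap x0 ∧
    (∀ s, t = s + 1 → gap (traj hn ε x0 t) ⟨s % (n-1), Nat.mod_lt s (by omega)⟩ = 0) := by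
  have hN : 0 < n - 1 := by omega
  intro t
  induction t with
  | zero =>
    refine ⟨hord, fun i _ => gap_le_maxGap x0 i, ?_, fun s hs => (Nat.succ_ne_zero s hs.symm).elim⟩
    have := gap_le_maxGap x0 ⟨0 % (n-1), Nat.mod_lt 0 hN⟩
    exact lt_of_le_of_lt this (by linarith)
  | succ t IH =>
    obtain ⟨hmono, hb, hc, hd⟩ := IH
    set G := maxGap x0 with hG
    set r := t % (n-1) with hrdef
    have hr : r < n - 1 := Nat.mod_lt t hN
    set x := traj hn ε x0 t with hx
    set x' := traj hn ε x0 (t+1) with hx'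
    set d := gap x ⟨r, hr⟩ with hdd
    have hdlt : d < 2 * G := hc
    have hdval : d = x ⟨r+1, by omega⟩ - x ⟨r, by omega⟩ := by rw [hdd]; rfl
    have hG0 : 0 < G := hpos
    have hle : ∀ (k l : ℕ) (hk : k < n) (hl : l < n), k ≤ l → x ⟨k, hk⟩ ≤ x ⟨l, hl⟩ := by
      intro k l hk hl h
      exact hmono (by simp [Fin.mk_le_mk, h])
    have hd0 : 0 ≤ d := by
      have := hle r (r+1) (by omega) (by omega) (by omega)
      rw [hdval]; linarith
    have hstep := step_coords hn ε x0 t hmono (show d < ε by linarith)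
    have hv : ∀ (k : ℕ) (h : k < n), x' ⟨k, h⟩ =
        if k = r ∨ k = r + 1 then
          (x ⟨r, by omega⟩ + x ⟨r+1, by omega⟩)/2 else x ⟨k, h⟩ := by
      intro k h
      simpa [← hrdef, ← hx, ← hx'] using hstep ⟨k, h⟩
    -- monotonicity of x'
    have hmono' : Monotone x' := by
      intro i j hij
      have hij' : (i:ℕ) ≤ (j:ℕ) := hij
      rw [show x' i = x' ⟨(i:ℕ), i.isLt⟩ from rfl, show x' j = x' ⟨(j:ℕ), j.isLt⟩ from rfl,
        hv _ i.isLt, hv _ j.isLt]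
      split_ifs with h1 h2 h2
      · exact le_refl _
      · have l1 := hle r (r+1) (by omega) (by omega) (by omega)
        have l2 := hle (r+1) (j:ℕ) (by omega) j.isLt (by omega)
        linarith
      · have l1 := hle r (r+1) (by omega) (by omega) (by omega)
        have l2 := hle (i:ℕ) r i.isLt (by omega) (by omega)
        linarith
      · exact hmono hij
    -- gap case computations
    have Hzero : ∀ (iv : ℕ) (hiv : iv < n-1), iv = r → gap x' ⟨iv, hiv⟩ = 0 := by
      intro iv hiv hi
      have e : gap x' ⟨iv, hiv⟩ = x' ⟨iv+1, by omega⟩ - x' ⟨iv, by omega⟩ := rfl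
      rw [e, hv (iv+1) (by omega), hv iv (by omega), if_pos (by omega), if_pos (by omega)]
      ring
    have Hprev : ∀ (iv : ℕ) (hiv : iv < n-1), iv + 1 = r → gap x' ⟨iv, hiv⟩ = d/2 := by
      intro iv hiv hi
      have ht1 : 1 ≤ t := by
        rcases Nat.eq_zero_or_pos t with h0|h0
        · exfalso; rw [h0] at hrdef; simp at hrdef; omega
        · exact h0
      obtain ⟨q, hq⟩ : ∃ q, t = (n-1)*q + r :=
        ⟨t/(n-1), by have := Nat.div_add_mod t (n-1); omega⟩
      have hmod : (t-1) % (n-1) = iv := by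
        have h1 : t - 1 = (n-1)*q + iv := by omega
        rw [h1, Nat.mul_add_mod, Nat.mod_eq_of_lt hiv]
      have hz := hd (t-1) (by omega)
      rw [gap_congr x (Nat.mod_lt _ (by omega)) hiv hmod] at hz
      have e : gap x' ⟨iv, hiv⟩ = x' ⟨iv+1, by omega⟩ - x' ⟨iv, by omega⟩ := rfl
      have e2 : gap x ⟨iv, hiv⟩ = x ⟨iv+1, by omega⟩ - x ⟨iv, by omega⟩ := rfl
      rw [e, hv (iv+1) (by omega), hv iv (by omega), if_pos (by omega), if_neg (by omega)]
      rw [e2] at hz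
      have hxr : x ⟨iv+1, by omega⟩ = x ⟨r, by omega⟩ := fin_app_congr x _ _ hi
      linarith [hxr, hz, hdval]
    have Hnext : ∀ (iv : ℕ) (hiv : iv < n-1), iv = r + 1 →
        gap x' ⟨iv, hiv⟩ = gap x ⟨iv, hiv⟩ + d/2 := by
      intro iv hiv hi
      have e : gap x' ⟨iv, hiv⟩ = x' ⟨iv+1, by omega⟩ - x' ⟨iv, by omega⟩ := rfl
      have e2 : gap x ⟨iv, hiv⟩ = x ⟨iv+1, by omega⟩ - x ⟨iv, by omega⟩ := rfl
      rw [e, e2, hv (iv+1) (by omega), hv iv (by omega), if_neg (by omega), if_pos (by omega)]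
      have hxr : x ⟨iv, by omega⟩ = x ⟨r+1, by omega⟩ := fin_app_congr x _ _ hi
      linarith [hxr, hdval]
    have Hsame : ∀ (iv : ℕ) (hiv : iv < n-1), iv ≠ r → iv + 1 ≠ r → iv ≠ r + 1 →
        gap x' ⟨iv, hiv⟩ = gap x ⟨iv, hiv⟩ := by
      intro iv hiv c1 c2 c3
      have e : gap x' ⟨iv, hiv⟩ = x' ⟨iv+1, by omega⟩ - x' ⟨iv, by omega⟩ := rfl
      have e2 : gap x ⟨iv, hiv⟩ = x ⟨iv+1, by omega⟩ - x ⟨iv, by omega⟩ := rfl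
      rw [e, e2, hv (iv+1) (by omega), hv iv (by omega), if_neg (by omega), if_neg (by omega)]
    -- mod structure of t+1
    have hmodsucc : (t+1) % (n-1) = (r+1) % (n-1) := by
      obtain ⟨q, hq⟩ : ∃ q, t = (n-1)*q + r :=
        ⟨t/(n-1), by have := Nat.div_add_mod t (n-1); omega⟩
      have h1 : t + 1 = (n-1)*q + (r+1) := by omega
      rw [h1, Nat.mul_add_mod]
    have hR : ((t+1) % (n-1) = r+1 ∧ r+1 < n-1) ∨ ((t+1) % (n-1) = 0 ∧ r+1 = n-1) := by
      rcases lt_or_eq_of_le (show r+1 ≤ n-1 by omega) with h|h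
      · exact Or.inl ⟨by rw [hmodsucc, Nat.mod_eq_of_lt h], h⟩
      · exact Or.inr ⟨by rw [hmodsucc, h, Nat.mod_self], h⟩
    refine ⟨hmono', ?_, ?_, ?_⟩
    · -- bound G on non-pending gaps
      rintro ⟨iv, hiv⟩ hi
      have hi' : iv ≠ (t+1) % (n-1) := hi
      by_cases c1 : iv = r
      · rw [Hzero iv hiv c1]; linarith
      by_cases c2 : iv + 1 = r
      · rw [Hprev iv hiv c2]; linarith
      by_cases c3 : iv = r + 1
      · exfalso
        rcases hR with ⟨hA, _⟩ | ⟨_, hB2⟩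
        · rw [hA] at hi'; exact hi' c3
        · omega
      · rw [Hsame iv hiv c1 c2 c3]; exact hb ⟨iv, hiv⟩ c1
    · -- pending gap < 2G
      rcases hR with ⟨hA, hAlt⟩ | ⟨hB, hBeq⟩
      · rw [gap_congr x' (Nat.mod_lt _ (by omega)) hAlt hA, Hnext (r+1) hAlt rfl]
        have := hb ⟨r+1, hAlt⟩ (show r+1 ≠ r by omega)
        linarith
      · rw [gap_congr x' (Nat.mod_lt _ (by omega)) (by omega : 0 < n-1) hB]
        by_cases c1 : r = 0
        · rw [Hzero 0 (by omega) c1.symm]; linarith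
        by_cases c2 : r = 1
        · rw [Hprev 0 (by omega) (by omega)]; linarith
        · rw [Hsame 0 (by omega) (by omega) (by omega) (by omega)]
          have := hb ⟨0, by omega⟩ (show 0 ≠ r by omega)
          linarith
    · -- previous gap is zero
      intro s hs
      have hse : s % (n-1) = r := by
        have h1 : s = t := by omega
        rw [h1]
      rw [gap_congr x' (Nat.mod_lt _ (by omega)) hr hse]
      exact Hzero r hr rfl
lemma traj_val {n : ℕ} (hn : 2 ≤ n) (ε : ℝ) (x0 : Fin n → ℝ) (hord : Monotone x0)
    (hpos : 0 < maxGap x0) (h2 : 2 * maxGap x0 ≤ ε) (t k : ℕ) (hk : k < n) :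
    traj hn ε x0 (t+1) ⟨k, hk⟩ =
      if k = t % (n-1) ∨ k = t % (n-1) + 1 then
        (traj hn ε x0 t ⟨t % (n-1), by have := Nat.mod_lt t (show 0 < n-1 by omega); omega⟩
         + traj hn ε x0 t ⟨t % (n-1) + 1, by have := Nat.mod_lt t (show 0 < n-1 by omega); omega⟩)/2
      else traj hn ε x0 t ⟨k, hk⟩ := by
  obtain ⟨hmono, hb, hc, hd⟩ := wd_inv hn ε x0 hord hpos h2 t
  have hlt : gap (traj hn ε x0 t) ⟨t % (n-1), Nat.mod_lt t (by omega)⟩ < ε := by linarith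
  simpa using step_coords hn ε x0 t hmono hlt ⟨k, hk⟩

lemma traj_mono {n : ℕ} (hn : 2 ≤ n) (ε : ℝ) (x0 : Fin n → ℝ) (hord : Monotone x0)
    (hpos : 0 < maxGap x0) (h2 : 2 * maxGap x0 ≤ ε) (t : ℕ) :
    Monotone (traj hn ε x0 t) := (wd_inv hn ε x0 hord hpos h2 t).1

lemma traj_le {n : ℕ} (hn : 2 ≤ n) (ε : ℝ) (x0 : Fin n → ℝ) (hord : Monotone x0)
    (hpos : 0 < maxGap x0) (h2 : 2 * maxGap x0 ≤ ε) (t : ℕ) (k l : ℕ)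
    (hk : k < n) (hl : l < n) (hkl : k ≤ l) :
    traj hn ε x0 t ⟨k, hk⟩ ≤ traj hn ε x0 t ⟨l, hl⟩ :=
  traj_mono hn ε x0 hord hpos h2 t (by simp [Fin.mk_le_mk, hkl])

lemma min_mono {n : ℕ} (hn : 2 ≤ n) (ε : ℝ) (x0 : Fin n → ℝ) (hord : Monotone x0)
    (hpos : 0 < maxGap x0) (h2 : 2 * maxGap x0 ≤ ε) (t : ℕ) :
    traj hn ε x0 t ⟨0, by omega⟩ ≤ traj hn ε x0 (t+1) ⟨0, by omega⟩ := by
  rw [traj_val hn ε x0 hord hpos h2 t 0 (by omega)]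
  by_cases h : 0 = t % (n-1)
  · rw [if_pos (Or.inl h)]
    have r0 : t % (n-1) = 0 := h.symm
    have h1 := traj_le hn ε x0 hord hpos h2 t (t % (n-1)) (t % (n-1) + 1)
      (by have := Nat.mod_lt t (show 0 < n-1 by omega); omega)
      (by have := Nat.mod_lt t (show 0 < n-1 by omega); omega) (by omega)
    have e : traj hn ε x0 t ⟨0, by omega⟩ =
        traj hn ε x0 t ⟨t % (n-1), by have := Nat.mod_lt t (show 0 < n-1 by omega); omega⟩ :=
      fin_app_congr _ _ _ r0.symm
    rw [e]; linarith
  · rw [if_neg (by omega)]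

lemma max_anti {n : ℕ} (hn : 2 ≤ n) (ε : ℝ) (x0 : Fin n → ℝ) (hord : Monotone x0)
    (hpos : 0 < maxGap x0) (h2 : 2 * maxGap x0 ≤ ε) (t : ℕ) :
    traj hn ε x0 (t+1) ⟨n-1, by omega⟩ ≤ traj hn ε x0 t ⟨n-1, by omega⟩ := by
  rw [traj_val hn ε x0 hord hpos h2 t (n-1) (by omega)]
  have hr : t % (n-1) < n - 1 := Nat.mod_lt t (by omega)
  by_cases h : n - 1 = t % (n-1) + 1
  · rw [if_pos (Or.inr h)]
    have r1 : t % (n-1) + 1 = n - 1 := h.symm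
    have h1 := traj_le hn ε x0 hord hpos h2 t (t % (n-1)) (t % (n-1) + 1)
      (by omega) (by omega) (by omega)
    have e : traj hn ε x0 t ⟨t % (n-1) + 1, by omega⟩ =
        traj hn ε x0 t ⟨n-1, by omega⟩ := fin_app_congr _ _ _ r1
    rw [← e]; linarith
  · rw [if_neg (by omega)]
lemma sweep {n : ℕ} (hn : 2 ≤ n) (ε : ℝ) (x0 : Fin n → ℝ) (hord : Monotone x0)
    (hpos : 0 < maxGap x0) (h2 : 2 * maxGap x0 ≤ ε) (q : ℕ) :
    ∀ s, (hs : s < n - 1) →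
    traj hn ε x0 (q*(n-1)+s+1) ⟨s+1, by omega⟩ ≤
      (1/2)^(s+1) * traj hn ε x0 (q*(n-1)) ⟨0, by omega⟩
      + (1-(1/2:ℝ)^(s+1)) * traj hn ε x0 (q*(n-1)) ⟨n-1, by omega⟩ := by
  have hanti : Antitone (fun t => traj hn ε x0 t ⟨n-1, by omega⟩) :=
    antitone_nat_of_succ_le (max_anti hn ε x0 hord hpos h2)
  intro s
  induction s with
  | zero =>
    intro hs
    have hmod : (q*(n-1)+0) % (n-1) = 0 := by
      have h1 : q*(n-1)+0 = (n-1)*q + 0 := by ring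
      rw [h1, Nat.mul_add_mod, Nat.zero_mod]
    rw [traj_val hn ε x0 hord hpos h2 (q*(n-1)+0) (0+1) (by omega),
      if_pos (Or.inr (by omega))]
    have e1 : traj hn ε x0 (q*(n-1)+0) ⟨(q*(n-1)+0) % (n-1), by
        have := Nat.mod_lt (q*(n-1)+0) (show 0 < n-1 by omega); omega⟩ =
        traj hn ε x0 (q*(n-1)) ⟨0, by omega⟩ := fin_app_congr _ _ _ hmod
    have e2 : traj hn ε x0 (q*(n-1)+0) ⟨(q*(n-1)+0) % (n-1) + 1, by
        have := Nat.mod_lt (q*(n-1)+0) (show 0 < n-1 by omega); omega⟩ =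
        traj hn ε x0 (q*(n-1)) ⟨1, by omega⟩ := fin_app_congr _ _ _ (by omega)
    rw [e1, e2]
    have h3 := traj_le hn ε x0 hord hpos h2 (q*(n-1)) 1 (n-1) (by omega) (by omega) (by omega)
    norm_num
    linarith
  | succ s IH =>
    intro hs
    have IH' := IH (by omega)
    have hmod : (q*(n-1)+(s+1)) % (n-1) = s+1 := by
      have h1 : q*(n-1)+(s+1) = (n-1)*q + (s+1) := by ring
      rw [h1, Nat.mul_add_mod, Nat.mod_eq_of_lt hs]
    rw [traj_val hn ε x0 hord hpos h2 (q*(n-1)+(s+1)) (s+1+1) (by omega),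
      if_pos (Or.inr (by omega))]
    have e1 : traj hn ε x0 (q*(n-1)+(s+1)) ⟨(q*(n-1)+(s+1)) % (n-1), by
        have := Nat.mod_lt (q*(n-1)+(s+1)) (show 0 < n-1 by omega); omega⟩ =
        traj hn ε x0 (q*(n-1)+s+1) ⟨s+1, by omega⟩ := fin_app_congr _ _ _ hmod
    have e2 : traj hn ε x0 (q*(n-1)+(s+1)) ⟨(q*(n-1)+(s+1)) % (n-1) + 1, by
        have := Nat.mod_lt (q*(n-1)+(s+1)) (show 0 < n-1 by omega); omega⟩ =
        traj hn ε x0 (q*(n-1)+(s+1)) ⟨s+2, by omega⟩ := fin_app_congr _ _ _ (by omega)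
    rw [e1, e2]
    have h3 := traj_le hn ε x0 hord hpos h2 (q*(n-1)+(s+1)) (s+2) (n-1)
      (by omega) (by omega) (by omega)
    have h4 : traj hn ε x0 (q*(n-1)+(s+1)) ⟨n-1, by omega⟩ ≤
        traj hn ε x0 (q*(n-1)) ⟨n-1, by omega⟩ := hanti (Nat.le_add_right _ _)
    have hpow : ((1/2:ℝ))^(s+1+1) = (1/2)^(s+1) * (1/2) := pow_succ _ _
    rw [hpow]
    linarith
/-- for `μ = 1/2`, if `ε` is at least twice the maximal gap of the
ordered initial profile, the phone chain of closest drives the process to consensus. -/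
theorem wd_phoneChain_consensus_mu_half {n : ℕ} (hn : 2 ≤ n) (ε : ℝ)
    (hε : 0 < ε) (x0 : Fin n → ℝ) (hord : Monotone x0)
    (hpos : 0 < maxGap x0) (h2 : 2 * maxGap x0 ≤ ε) :
    ∃ c : ℝ, ∀ i : Fin n,
      Tendsto (fun t => wdTraj ε (1 / 2) (phoneChain n hn) x0 t i) atTop (nhds c) := by
  set m : ℕ → ℝ := fun t => traj hn ε x0 t ⟨0, by omega⟩ with hmdef
  set Mx : ℕ → ℝ := fun t => traj hn ε x0 t ⟨n-1, by omega⟩ with hMdef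
  have hm : Monotone m := monotone_nat_of_le_succ (fun t => min_mono hn ε x0 hord hpos h2 t)
  have hM : Antitone Mx := antitone_nat_of_succ_le (fun t => max_anti hn ε x0 hord hpos h2 t)
  have hmM : ∀ t, m t ≤ Mx t := fun t =>
    traj_le hn ε x0 hord hpos h2 t 0 (n-1) (by omega) (by omega) (by omega)
  have hc0 : (0:ℝ) ≤ 1 - (1/2)^(n-1) := by
    have : ((1:ℝ)/2)^(n-1) ≤ 1 := pow_le_one₀ (by norm_num) (by norm_num)
    linarith
  have hc1 : (1:ℝ) - (1/2)^(n-1) < 1 := by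
    have : (0:ℝ) < (1/2)^(n-1) := by positivity
    linarith
  have hcontr : ∀ q, Mx ((q+1)*(n-1)) - m ((q+1)*(n-1)) ≤
      (1 - (1/2:ℝ)^(n-1)) * (Mx (q*(n-1)) - m (q*(n-1))) := by
    intro q
    have htime : (q+1)*(n-1) = q*(n-1)+(n-2)+1 := by rw [Nat.add_mul, Nat.one_mul]; omega
    have hsw := sweep hn ε x0 hord hpos h2 q (n-2) (by omega)
    have hexp : ((1/2:ℝ))^(n-2+1) = (1/2)^(n-1) := by rw [show n-2+1 = n-1 by omega]
    rw [hexp] at hsw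
    have e1 : Mx ((q+1)*(n-1)) = traj hn ε x0 (q*(n-1)+(n-2)+1) ⟨n-2+1, by omega⟩ := by
      show traj hn ε x0 ((q+1)*(n-1)) ⟨n-1, by omega⟩ = _
      rw [htime]
      exact fin_app_congr _ _ _ (by omega)
    have hmq : m (q*(n-1)) ≤ m ((q+1)*(n-1)) := hm (Nat.mul_le_mul_right _ (by omega))
    rw [e1]
    linarith
  have hgeo : ∀ q, Mx (q*(n-1)) - m (q*(n-1)) ≤
      (1-(1/2:ℝ)^(n-1))^q * (Mx 0 - m 0) := by
    intro q
    induction q with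
    | zero =>
      have e : 0*(n-1) = 0 := Nat.zero_mul _
      rw [e, pow_zero, one_mul]
    | succ q IH =>
      have h1 := hcontr q
      have h2' := mul_le_mul_of_nonneg_left IH hc0
      have hpow : (1-(1/2:ℝ)^(n-1))^(q+1) = (1-(1/2:ℝ)^(n-1))^q * (1-(1/2:ℝ)^(n-1)) :=
        pow_succ _ _
      rw [hpow]
      nlinarith [h1, h2']
  have hRanti : ∀ t u, t ≤ u → Mx u - m u ≤ Mx t - m t := by
    intro t u h
    have h1 := hm h
    have h2' := hM h
    linarith
  have hR0 : ∀ t, 0 ≤ Mx t - m t := fun t => by linarith [hmM t]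
  have hRt : ∀ t, Mx t - m t ≤ (1-(1/2:ℝ)^(n-1))^(t/(n-1)) * (Mx 0 - m 0) := fun t =>
    le_trans (hRanti _ t (Nat.div_mul_le_self t (n-1))) (hgeo (t/(n-1)))
  have hdiv : Tendsto (fun t : ℕ => t/(n-1)) atTop atTop := by
    apply Filter.tendsto_atTop_atTop.mpr
    intro b
    refine ⟨b*(n-1), fun a ha => ?_⟩
    rw [Nat.le_div_iff_mul_le (by omega : 0 < n-1)]
    exact ha
  have hpowtend : Tendsto (fun q : ℕ => (1-(1/2:ℝ)^(n-1))^q) atTop (nhds 0) :=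
    tendsto_pow_atTop_nhds_zero_of_lt_one hc0 hc1
  have hub : Tendsto (fun t : ℕ => (1-(1/2:ℝ)^(n-1))^(t/(n-1)) * (Mx 0 - m 0))
      atTop (nhds 0) := by
    have := (hpowtend.comp hdiv).mul_const (Mx 0 - m 0)
    simpa using this
  have hRtend : Tendsto (fun t => Mx t - m t) atTop (nhds 0) :=
    tendsto_of_tendsto_of_tendsto_of_le_of_le tendsto_const_nhds hub hR0 hRt
  have hbdd : BddAbove (Set.range m) := by
    refine ⟨Mx 0, ?_⟩
    rintro _ ⟨t, rfl⟩
    exact le_trans (hmM t) (hM (Nat.zero_le t))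
  have hmtend : Tendsto m atTop (nhds (⨆ t, m t)) := tendsto_atTop_ciSup hm hbdd
  have heq : (fun t => m t + (Mx t - m t)) = fun t => Mx t := by funext t; ring
  have hMtend : Tendsto (fun t => Mx t) atTop (nhds ((⨆ t, m t) + 0)) := by
    rw [← heq]; exact hmtend.add hRtend
  rw [add_zero] at hMtend
  refine ⟨⨆ t, m t, fun i => ?_⟩
  have hlow : ∀ t, m t ≤ wdTraj ε (1/2) (phoneChain n hn) x0 t i := by
    intro t
    exact traj_mono hn ε x0 hord hpos h2 t
      (show (⟨0, by omega⟩ : Fin n) ≤ i by simp [Fin.le_def])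
  have hhigh : ∀ t, wdTraj ε (1/2) (phoneChain n hn) x0 t i ≤ Mx t := by
    intro t
    have hle : (i:ℕ) ≤ n-1 := by have := i.isLt; omega
    exact traj_mono hn ε x0 hord hpos h2 t
      (show i ≤ (⟨n-1, by omega⟩ : Fin n) by simpa [Fin.le_def] using hle)
  exact tendsto_of_tendsto_of_tendsto_of_le_of_le hmtend hMtend hlow hhigh
end
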